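/- arXiv:2306.15543 — 8 statements merged into one kernel-verified Lean document; each statement's English description precedes it below -/
import Mathlib

section
/- Every congestion game admits a pure Nash equilibrium: there exists a strategy profile p* = (p*_1,…,p*_n) with p*_i ∈ 𝒫_i for each i, such that for every agent i and every deviation p'_i ∈ 𝒫_i, C_i(p*_i, p*_{-i}) ≤ C_i(p'_i, p*_{-i}). -/
open Finset

/-- **Existence of pure Nash equilibria in congestion games.**
There are `n` agents and a finite resource set `E`. Agent `i` has a nonempty
strategy set `P i` of subsets of `E`; each resource `e` has a nonnegative,
nondecreasing cost function `c e : ℕ → ℝ`. The load of `e` under a profile `p`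
is the number of agents using `e`, and the cost of agent `i` is the sum over
`e ∈ p i` of `c e (load)`.  There is a profile from which no unilateral
deviation decreases the deviator's cost. -/
theorem congestion_game_pure_nash_exists
    {E : Type*} [Fintype E] [DecidableEq E]
    (n : ℕ)
    (P : Fin n → Finset (Finset E))
    (hP : ∀ i, (P i).Nonempty)
    (c : E → ℕ → ℝ)
    (hc_nonneg : ∀ e k, 0 ≤ c e k)
    (hc_mono : ∀ e, Monotone (c e)) :
    ∃ p : Fin n → Finset E,
      (∀ i, p i ∈ P i) ∧
      ∀ i : Fin n, ∀ q ∈ P i,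
        ∑ e ∈ p i, c e ((univ.filter fun j => e ∈ p j)).card ≤
        ∑ e ∈ q, c e ((univ.filter fun j => e ∈ Function.update p i q j)).card := by
  classical
  -- Rosenthal potential
  set Φ : (Fin n → Finset E) → ℝ := fun p =>
    ∑ e : E, ∑ k ∈ Finset.range ((univ.filter fun j => e ∈ p j)).card, c e (k + 1) with hΦ
  have hne : (Fintype.piFinset P).Nonempty :=
    ⟨fun i => (hP i).choose, Fintype.mem_piFinset.mpr fun i => (hP i).choose_spec⟩
  obtain ⟨p, hp, hmin⟩ := Finset.exists_min_image (Fintype.piFinset P) Φ hne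
  have hpP : ∀ i, p i ∈ P i := Fintype.mem_piFinset.mp hp
  refine ⟨p, hpP, ?_⟩
  intro i q hq
  set p' : Fin n → Finset E := Function.update p i q with hp'
  have hp'mem : p' ∈ Fintype.piFinset P := by
    refine Fintype.mem_piFinset.mpr fun j => ?_
    by_cases h : j = i
    · subst h; simpa [hp', Function.update_self] using hq
    · simpa [hp', Function.update_of_ne h] using hpP j
  have hΦle : Φ p ≤ Φ p' := hmin p' hp'mem
  -- key potential identity
  have key : Φ p' + ∑ e ∈ p i, c e ((univ.filter fun j => e ∈ p j)).card
      = Φ p + ∑ e ∈ q, c e ((univ.filter fun j => e ∈ p' j)).card := by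
    have h1 : ∑ e ∈ p i, c e ((univ.filter fun j => e ∈ p j)).card
        = ∑ e : E, if e ∈ p i then c e ((univ.filter fun j => e ∈ p j)).card else 0 := by
      rw [Finset.sum_ite_mem, Finset.univ_inter]
    have h2 : ∑ e ∈ q, c e ((univ.filter fun j => e ∈ p' j)).card
        = ∑ e : E, if e ∈ q then c e ((univ.filter fun j => e ∈ p' j)).card else 0 := by
      rw [Finset.sum_ite_mem, Finset.univ_inter]
    rw [h1, h2, hΦ, ← Finset.sum_add_distrib, ← Finset.sum_add_distrib]
    refine Finset.sum_congr rfl fun e _ => ?_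
    -- decompose loads
    set m : ℕ := ∑ j ∈ univ.erase i, (if e ∈ p j then 1 else 0) with hm
    have hload : ((univ.filter fun j => e ∈ p j)).card = m + (if e ∈ p i then 1 else 0) := by
      rw [Finset.card_filter, hm, ← Finset.sum_erase_add _ _ (Finset.mem_univ i)]
    have hload' : ((univ.filter fun j => e ∈ p' j)).card = m + (if e ∈ q then 1 else 0) := by
      rw [Finset.card_filter, ← Finset.sum_erase_add _ _ (Finset.mem_univ i)]
      congr 1
      · rw [hm]
        refine Finset.sum_congr rfl fun j hj => ?_
        rw [hp', Function.update_of_ne (Finset.ne_of_mem_erase hj)]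
      · simp [hp', Function.update_self]
    rw [hload, hload']
    by_cases h1 : e ∈ p i <;> by_cases h2 : e ∈ q <;>
      simp [h1, h2, Finset.sum_range_succ] <;> ring
  have : ∑ e ∈ p i, c e ((univ.filter fun j => e ∈ p j)).card
      ≤ ∑ e ∈ q, c e ((univ.filter fun j => e ∈ p' j)).card := by linarith
  simpa [hp'] using this
end

section
/- For every strategy profile p = (p_1,…,p_n), every agent i, and every deviation p'_i ∈ 𝒫_i, the Rosenthal potential satisfies Φ_R(p'_i, p_{-i}) − Φ_R(p) = C_i(p'_i, p_{-i}) − C_i(p). -/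
open Finset

/-- **Rosenthal potential is an exact potential.**
For any profile `p` (with `p j ∈ P j`), any agent `i` and any deviation
`q ∈ P i`, the change of the Rosenthal potential
`Φ_R(p) = ∑_{e ∈ E} ∑_{j=1}^{load_e(p)} c e j`
equals the change of agent `i`'s cost. -/
theorem rosenthal_potential_difference
    {E : Type*} [Fintype E] [DecidableEq E]
    (n : ℕ)
    (P : Fin n → Finset (Finset E))
    (hP : ∀ i, (P i).Nonempty)
    (c : E → ℕ → ℝ)
    (hc_nonneg : ∀ e k, 0 ≤ c e k)
    (hc_mono : ∀ e, Monotone (c e))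
    (p : Fin n → Finset E) (hp : ∀ j, p j ∈ P j)
    (i : Fin n) (q : Finset E) (hq : q ∈ P i) :
    (∑ e : E, ∑ j ∈ Finset.Icc 1 ((univ.filter fun k => e ∈ Function.update p i q k)).card, c e j)
      - (∑ e : E, ∑ j ∈ Finset.Icc 1 ((univ.filter fun k => e ∈ p k)).card, c e j)
    = (∑ e ∈ q, c e ((univ.filter fun k => e ∈ Function.update p i q k)).card)
      - (∑ e ∈ p i, c e ((univ.filter fun k => e ∈ p k)).card) := by
  classical
  set A : E → Finset (Fin n) := fun e => univ.filter fun k => e ∈ p k with hA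
  set A' : E → Finset (Fin n) := fun e => univ.filter fun k => e ∈ Function.update p i q k
    with hA'
  have key : ∀ e, A' e = if e ∈ q then insert i ((A e).erase i) else (A e).erase i := by
    intro e
    ext k
    by_cases hk : k = i
    · subst hk
      by_cases he : e ∈ q <;> simp [he, A, A']
    · by_cases he : e ∈ q <;>
        simp [he, hk, Function.update_of_ne hk, A, A']
  have hiA : ∀ e, i ∈ A e ↔ e ∈ p i := by intro e; simp [A]
  have card' : ∀ e, (A' e).card
      = (if e ∈ q then 1 else 0) + ((A e).erase i).card := by
    intro e
    rw [key e]
    by_cases he : e ∈ q <;> simp [he, Finset.card_insert_of_notMem (Finset.notMem_erase i _)] <;> omega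
  have hq' : (∑ e ∈ q, c e ((A' e).card))
      = ∑ e : E, if e ∈ q then c e ((A' e).card) else 0 := by
    rw [Finset.sum_ite_mem, univ_inter]
  have hp' : (∑ e ∈ p i, c e ((A e).card))
      = ∑ e : E, if e ∈ p i then c e ((A e).card) else 0 := by
    rw [Finset.sum_ite_mem, univ_inter]
  rw [hq', hp', ← Finset.sum_sub_distrib, ← Finset.sum_sub_distrib]
  refine Finset.sum_congr rfl fun e _ => ?_
  have hcard' := card' e
  by_cases hpi : e ∈ p i
  · have hAe : (A e).card = ((A e).erase i).card + 1 := by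
      rw [Finset.card_erase_add_one ((hiA e).2 hpi)]
    by_cases he : e ∈ q
    · -- loads equal
      have : (A' e).card = (A e).card := by
        rw [hcard', hAe]; simp [he]; ring
      rw [this]
      simp [he, hpi, A]
    · -- load drops by one
      have h1 : (A e).card = (A' e).card + 1 := by
        rw [hcard', hAe]; simp [he]
      rw [h1, Finset.sum_Icc_succ_top (Nat.one_le_iff_ne_zero.2 (Nat.succ_ne_zero _))]
      simp [he, hpi, h1, A']
  · have hAe : ((A e).erase i).card = (A e).card := by
      rw [Finset.erase_eq_of_notMem]
      intro h; exact hpi ((hiA e).1 h)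
    by_cases he : e ∈ q
    · have h1 : (A' e).card = (A e).card + 1 := by
        rw [hcard', hAe]; simp [he]; ring
      rw [h1, Finset.sum_Icc_succ_top (Nat.one_le_iff_ne_zero.2 (Nat.succ_ne_zero _))]
      simp [he, hpi, h1, A]
    · have : (A' e).card = (A e).card := by rw [hcard', hAe]; simp [he]
      rw [this]
      simp [he, hpi, A]
end

section
/- (Online gradient descent on time-expanding bounded-away polytopes.) Assume m ≥ 1, c_max ≥ 0, and let (γ_t)_{t≥1} be a nonincreasing sequence of positive reals and (μ_t)_{t≥1} a nonincreasing sequence of positive reals with μ_1 ≤ 1/m. Let (ĉ^t)_{t=1}^T be vectors in ℝ^m with ‖ĉ^t‖ ≤ √m · c_max / μ_t for all t. Let (x^t)_{t=1}^{T+1} be a sequence with x^1 ∈ X^{μ_1} and, for each t, x^{t+1} ∈ X^{μ_{t+1}} satisfying the projection characterization ⟨x^t − γ_t ĉ^t − x^{t+1}, y − x^{t+1}⟩ ≤ 0 for all y ∈ X^{μ_{t+1}} (i.e., x^{t+1} is the Euclidean projection of x^t − γ_t ĉ^t onto X^{μ_{t+1}}). Then Σ_{t=1}^T ⟨ĉ^t,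 x^t − x*_{μ_t}⟩ ≤ 2m/γ_T + m c_max² Σ_{t=1}^T γ_t/μ_t². -/
open Finset RealInnerProductSpace


lemma proj_step {F : Type*} [NormedAddCommGroup F] [InnerProductSpace ℝ F]
    (p q z c : F) (h : ⟪p - c - q, z - q⟫ ≤ 0) :
    2 * ⟪c, p - z⟫ ≤ ‖p - z‖^2 - ‖q - z‖^2 + ‖c‖^2 := by
  have key : (p - z - c - (q - z)) + (q - z) = p - z - c := by abel
  have h1 := norm_add_sq_real (p - z - c - (q - z)) (q - z)
  rw [key] at h1
  have h2 : ‖p - z - c‖^2 = ‖p - z‖^2 - 2*⟪p-z,c⟫ + ‖c‖^2 := norm_sub_sq_real _ _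
  have h3 : (0:ℝ) ≤ ⟪p - z - c - (q - z), q - z⟫ := by
    have e1 : p - z - c - (q - z) = p - c - q := by abel
    have e2 : z - q = -(q - z) := by abel
    rw [e2, inner_neg_right] at h
    rw [e1]; linarith
  have h4 : (0:ℝ) ≤ ‖p - z - c - (q - z)‖^2 := sq_nonneg _
  have h5 : ⟪c, p - z⟫ = ⟪p - z, c⟫ := real_inner_comm _ _
  linarith

lemma box_norm_sub {m : ℕ} (u v : EuclideanSpace ℝ (Fin m))
    (hu : ∀ e, u e ∈ Set.Icc (0:ℝ) 1) (hv : ∀ e, v e ∈ Set.Icc (0:ℝ) 1) :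
    ‖u - v‖^2 ≤ m := by
  rw [EuclideanSpace.norm_eq, Real.sq_sqrt (by positivity)]
  calc ∑ i, ‖(u - v) i‖^2 ≤ ∑ _i : Fin m, (1:ℝ) := by
        apply Finset.sum_le_sum
        intro i _
        have h1 := hu i; have h2 := hv i
        simp only [Set.mem_Icc] at h1 h2
        have : (u - v) i = u i - v i := rfl
        rw [this, Real.norm_eq_abs, sq_abs]
        nlinarith [h1.1, h1.2, h2.1, h2.2]
    _ = m := by simp

lemma box_norm_sub' {m : ℕ} (u v : EuclideanSpace ℝ (Fin m))
    (hu : ∀ e, u e ∈ Set.Icc (0:ℝ) 1) (hv : ∀ e, v e ∈ Set.Icc (0:ℝ) 1) :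
    ‖u - v‖ ≤ Real.sqrt m := by
  have h := Real.sqrt_le_sqrt (box_norm_sub u v hu hv)
  rwa [Real.sqrt_sq (norm_nonneg _)] at h

lemma inner_sq_diff {F : Type*} [NormedAddCommGroup F] [InnerProductSpace ℝ F] (a b : F) :
    ‖a‖^2 - ‖b‖^2 = ⟪a - b, a + b⟫ := by
  rw [inner_sub_left, inner_add_right, inner_add_right,
    real_inner_self_eq_norm_sq, real_inner_self_eq_norm_sq, real_inner_comm b a]
  ring

lemma ogd_sum_aux (M K : ℝ) (hK : 0 ≤ K)
    (γ μ D E : ℕ → ℝ)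
    (hγpos : ∀ t, 0 < γ t) (hγanti : ∀ t₁ t₂, t₁ ≤ t₂ → γ t₂ ≤ γ t₁)
    (hμanti : ∀ t₁ t₂, t₁ ≤ t₂ → μ t₂ ≤ μ t₁)
    (T : ℕ) (hT : 1 ≤ T)
    (hD : ∀ t ∈ Finset.Icc 1 T, D t ≤ M)
    (hE0 : ∀ t ∈ Finset.Icc 1 T, 0 ≤ E t)
    (hEM : ∀ t ∈ Finset.Icc 1 T, E t ≤ M)
    (hDE : ∀ t, 1 ≤ t → t + 1 ≤ T → D (t + 1) - E t ≤ K * (μ t - μ (t + 1))) :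
    ∑ t ∈ Finset.Icc 1 T, (D t - E t) / (2 * γ t)
      ≤ (M / 2 + K * (μ 1 - μ T) / 2) / γ T := by
  have main : ∀ N, 1 ≤ N → N ≤ T →
      (∑ t ∈ Finset.Icc 1 N, (D t - E t) / (2 * γ t)) + E N / (2 * γ N)
        ≤ (M / 2 + K * (μ 1 - μ N) / 2) / γ N := by
    intro N hN1
    induction N, hN1 using Nat.le_induction with
    | base =>
      intro hNT
      rw [Finset.Icc_self, Finset.sum_singleton]
      have hg := hγpos 1
      have hd := hD 1 (Finset.mem_Icc.mpr ⟨le_refl 1, hNT⟩)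
      have heq : (D 1 - E 1)/(2*γ 1) + E 1/(2*γ 1) = D 1/(2*γ 1) := by
        rw [← add_div, sub_add_cancel]
      rw [heq]
      have : (M / 2 + K * (μ 1 - μ 1) / 2) / γ 1 = (M/2) / γ 1 := by ring_nf
      rw [this, div_div]
      gcongr
    | succ N hN1 ih =>
      intro hNT
      have hN'T : N ≤ T := by omega
      have ihh := ih hN'T
      rw [Finset.sum_Icc_succ_top (by omega : 1 ≤ N + 1)]
      have hgN := hγpos N
      have hgN1 := hγpos (N+1)
      have hba := hγanti N (N+1) (by omega)
      have heq : (D (N+1) - E (N+1))/(2*γ (N+1)) + E (N+1)/(2*γ (N+1))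
          = D (N+1)/(2*γ (N+1)) := by
        rw [← add_div, sub_add_cancel]
      rw [add_assoc, heq]
      have hde := hDE N hN1 hNT
      have he0 := hE0 N (Finset.mem_Icc.mpr ⟨hN1, hN'T⟩)
      have heM := hEM N (Finset.mem_Icc.mpr ⟨hN1, hN'T⟩)
      have hμ1N := hμanti 1 N hN1
      have hμNN := hμanti N (N+1) (by omega)
      have key : (M / 2 + K * (μ 1 - μ N) / 2) / γ N - E N / (2 * γ N)
          + D (N+1) / (2 * γ (N+1)) ≤ (M / 2 + K * (μ 1 - μ (N+1)) / 2) / γ (N+1) := by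
        have e1 : (M / 2 + K * (μ 1 - μ N) / 2) / γ N - E N / (2 * γ N)
            + D (N+1) / (2 * γ (N+1))
            = (γ (N+1) * (M + K * (μ 1 - μ N)) - γ (N+1) * E N + γ N * D (N+1))
              / (2 * γ N * γ (N+1)) := by
          field_simp
        have e2 : (M / 2 + K * (μ 1 - μ (N+1)) / 2) / γ (N+1)
            = (γ N * (M + K * (μ 1 - μ (N+1)))) / (2 * γ N * γ (N+1)) := by
          field_simp
        rw [e1, e2]
        gcongr (?_ : ℝ) / _
        nlinarith [mul_nonneg (sub_nonneg.2 hba) (sub_nonneg.2 heM),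
          mul_nonneg (mul_nonneg (sub_nonneg.2 hba) hK) (sub_nonneg.2 hμ1N),
          mul_nonneg hgN.le (sub_nonneg.2 (by linarith : D (N+1) ≤ E N + K * (μ N - μ (N+1))))]
      linarith
  have h := main T hT (le_refl T)
  have he0 := hE0 T (Finset.mem_Icc.mpr ⟨hT, le_refl T⟩)
  have hg := hγpos T
  have : 0 ≤ E T / (2 * γ T) := by positivity
  linarith

/-- **Online gradient descent on time-expanding bounded-away polytopes.**
`X ⊆ [0,1]^m` is convex, `A` is the set of active coordinates, and for `μ > 0`
the bounded-away polytope is `X^μ = {x ∈ X : x e ≥ μ for e ∈ A}`. With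
comparators `x*_μ = (1 - mμ)•x* + (mμ)•s` (where `x* ∈ X`, `s ∈ X`,
`s e ≥ 1/m` on `A`), nonincreasing positive step sizes `γ_t` and exploration
parameters `μ_t ≤ 1/m`, cost estimates `‖ĉ^t‖ ≤ √m·cmax/μ_t`, and iterates
given by Euclidean projection of `x^t - γ_t ĉ^t` onto `X^{μ_{t+1}}`, the
linearized regret satisfies
`∑_{t=1}^T ⟪ĉ^t, x^t - x*_{μ_t}⟫ ≤ 2m/γ_T + m cmax² ∑_{t=1}^T γ_t/μ_t²`. -/
theorem ogd_time_expanding_regret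
    (m : ℕ) (hm : 1 ≤ m)
    (cmax : ℝ) (hcmax : 0 ≤ cmax)
    (X : Set (EuclideanSpace ℝ (Fin m)))
    (hXconv : Convex ℝ X)
    (hXbox : ∀ x ∈ X, ∀ e, x e ∈ Set.Icc (0:ℝ) 1)
    (A : Finset (Fin m))
    (xstar : EuclideanSpace ℝ (Fin m)) (hxstar : xstar ∈ X)
    (s : EuclideanSpace ℝ (Fin m)) (hsX : s ∈ X)
    (hsA : ∀ e ∈ A, 1 / (m : ℝ) ≤ s e)
    (T : ℕ)
    (γ : ℕ → ℝ) (hγpos : ∀ t, 0 < γ t)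
    (hγanti : ∀ t₁ t₂, t₁ ≤ t₂ → γ t₂ ≤ γ t₁)
    (μ : ℕ → ℝ) (hμpos : ∀ t, 0 < μ t)
    (hμanti : ∀ t₁ t₂, t₁ ≤ t₂ → μ t₂ ≤ μ t₁)
    (hμ1 : μ 1 ≤ 1 / (m : ℝ))
    (chat : ℕ → EuclideanSpace ℝ (Fin m))
    (hchat : ∀ t ∈ Icc 1 T, ‖chat t‖ ≤ Real.sqrt m * cmax / μ t)
    (x : ℕ → EuclideanSpace ℝ (Fin m))
    (hx1 : x 1 ∈ X ∧ ∀ e ∈ A, μ 1 ≤ x 1 e)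
    (hxmem : ∀ t ∈ Icc 1 T, x (t + 1) ∈ X ∧ ∀ e ∈ A, μ (t + 1) ≤ x (t + 1) e)
    (hproj : ∀ t ∈ Icc 1 T, ∀ y ∈ X, (∀ e ∈ A, μ (t + 1) ≤ y e) →
      ⟪x t - γ t • chat t - x (t + 1), y - x (t + 1)⟫ ≤ 0) :
    ∑ t ∈ Icc 1 T,
        ⟪chat t, x t - ((1 - (m : ℝ) * μ t) • xstar + ((m : ℝ) * μ t) • s)⟫ ≤
      2 * m / γ T + m * cmax ^ 2 * ∑ t ∈ Icc 1 T, γ t / (μ t) ^ 2 := by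
  classical
  have hM1 : (1:ℝ) ≤ (m:ℝ) := by exact_mod_cast hm
  have hM0 : (0:ℝ) < m := by linarith
  set Z : ℕ → EuclideanSpace ℝ (Fin m) :=
    fun t => (1 - (m:ℝ) * μ t) • xstar + ((m:ℝ) * μ t) • s with hZ
  have hZfold : ∀ t, ((1 - (m:ℝ) * μ t) • xstar + ((m:ℝ) * μ t) • s) = Z t := fun t => rfl
  have hμle : ∀ t, 1 ≤ t → (m:ℝ) * μ t ≤ 1 := by
    intro t ht
    have h1 : μ t ≤ 1/(m:ℝ) := le_trans (hμanti 1 t ht) hμ1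
    rw [le_div_iff₀ hM0] at h1
    rw [mul_comm]; exact h1
  have hZmem : ∀ t, 1 ≤ t → Z t ∈ X := by
    intro t ht
    have hμt := hμpos t
    have h1 : 0 ≤ (m:ℝ) * μ t := by positivity
    exact hXconv hxstar hsX (by linarith [hμle t ht]) h1 (by ring)
  have hZcoord : ∀ t, 1 ≤ t → ∀ e ∈ A, μ t ≤ Z t e := by
    intro t ht e he
    have hx0 : 0 ≤ xstar e := (hXbox xstar hxstar e).1
    have hse := hsA e he
    have h2 := hμle t ht
    have hZe : Z t e = (1 - (m:ℝ)*μ t) * xstar e + ((m:ℝ)*μ t) * s e := by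
      simp [hZ]
    rw [hZe]
    have hμt := hμpos t
    have hmul : ((m:ℝ)*μ t) * (1/(m:ℝ)) ≤ ((m:ℝ)*μ t) * s e :=
      mul_le_mul_of_nonneg_left hse (by positivity)
    have hmm : ((m:ℝ)*μ t) * (1/(m:ℝ)) = μ t := by field_simp
    nlinarith [mul_nonneg (by linarith : (0:ℝ) ≤ 1 - (m:ℝ)*μ t) hx0]
  have hxX : ∀ t ∈ Icc 1 T, x t ∈ X := by
    intro t ht
    obtain ⟨h1, h2⟩ := Finset.mem_Icc.mp ht
    match t, h1 with
    | 1, _ => exact hx1.1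
    | (r+2), _ => exact (hxmem (r+1) (Finset.mem_Icc.mpr ⟨by omega, by omega⟩)).1
  set D : ℕ → ℝ := fun t => ‖x t - Z t‖^2 with hDdef
  set E : ℕ → ℝ := fun t => ‖x (t+1) - Z t‖^2 with hEdef
  -- per-step bound
  have hstep : ∀ t ∈ Icc 1 T, ⟪chat t, x t - Z t⟫
      ≤ (D t - E t)/(2*γ t) + γ t * ((m:ℝ)*cmax^2/μ t^2)/2 := by
    intro t ht
    obtain ⟨ht1, ht2⟩ := Finset.mem_Icc.mp ht
    have hg := hγpos t
    have hμt := hμpos t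
    have hproj' := hproj t ht (Z t) (hZmem t ht1)
      (fun e he => le_trans (hμanti t (t+1) (by omega)) (hZcoord t ht1 e he))
    have hkey := proj_step (x t) (x (t+1)) (Z t) (γ t • chat t) hproj'
    rw [real_inner_smul_left] at hkey
    have hnorm : ‖γ t • chat t‖^2 = γ t^2 * ‖chat t‖^2 := by
      rw [norm_smul, Real.norm_eq_abs, mul_pow, sq_abs]
    have hc2 : ‖chat t‖^2 ≤ (m:ℝ)*cmax^2/μ t^2 := by
      calc ‖chat t‖^2 ≤ (Real.sqrt m * cmax / μ t)^2 :=
            pow_le_pow_left₀ (norm_nonneg _) (hchat t ht) 2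
        _ = (m:ℝ)*cmax^2/μ t^2 := by rw [div_pow, mul_pow, Real.sq_sqrt hM0.le]
    have h2γ : (0:ℝ) < 2 * γ t := by linarith
    have hform : (D t - E t)/(2*γ t) + γ t * ((m:ℝ)*cmax^2/μ t^2)/2
        = ((D t - E t) + γ t^2 * ((m:ℝ)*cmax^2/μ t^2))/(2*γ t) := by
      field_simp
    rw [hform, le_div_iff₀ h2γ]
    have hDt : D t = ‖x t - Z t‖^2 := rfl
    have hEt : E t = ‖x (t+1) - Z t‖^2 := rfl
    rw [hDt, hEt]
    nlinarith [mul_le_mul_of_nonneg_left hc2 (sq_nonneg (γ t))]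
  -- drift bound
  have hdrift : ∀ t, 1 ≤ t → t + 1 ≤ T →
      D (t+1) - E t ≤ (2*(m:ℝ)^2) * (μ t - μ (t+1)) := by
    intro t ht1 ht1T
    have hxm := (hxmem t (Finset.mem_Icc.mpr ⟨ht1, by omega⟩)).1
    have hZt := hZmem t ht1
    have hZt1 := hZmem (t+1) (by omega)
    have hΔ : 0 ≤ μ t - μ (t+1) := sub_nonneg.2 (hμanti t (t+1) (by omega))
    have hid := inner_sq_diff (x (t+1) - Z (t+1)) (x (t+1) - Z t)
    have he1 : x (t+1) - Z (t+1) - (x (t+1) - Z t) = Z t - Z (t+1) := by abel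
    rw [he1] at hid
    have hZdiff : Z t - Z (t+1) = ((m:ℝ) * (μ t - μ (t+1))) • (s - xstar) := by
      simp only [hZ]; module
    have hsx := box_norm_sub' s xstar (hXbox s hsX) (hXbox xstar hxstar)
    have hnd : ‖Z t - Z (t+1)‖ ≤ (m:ℝ) * (μ t - μ (t+1)) * Real.sqrt m := by
      rw [hZdiff, norm_smul, Real.norm_eq_abs,
        abs_of_nonneg (by positivity : (0:ℝ) ≤ (m:ℝ) * (μ t - μ (t+1)))]
      exact mul_le_mul_of_nonneg_left hsx (by positivity)
    have hs1 : ‖x (t+1) - Z (t+1)‖ ≤ Real.sqrt m :=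
      box_norm_sub' _ _ (hXbox _ hxm) (hXbox _ hZt1)
    have hs2 : ‖x (t+1) - Z t‖ ≤ Real.sqrt m :=
      box_norm_sub' _ _ (hXbox _ hxm) (hXbox _ hZt)
    have hsum : ‖(x (t+1) - Z (t+1)) + (x (t+1) - Z t)‖ ≤ 2 * Real.sqrt m := by
      calc ‖(x (t+1) - Z (t+1)) + (x (t+1) - Z t)‖
          ≤ ‖x (t+1) - Z (t+1)‖ + ‖x (t+1) - Z t‖ := norm_add_le _ _
        _ ≤ Real.sqrt m + Real.sqrt m := add_le_add hs1 hs2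
        _ = 2 * Real.sqrt m := by ring
    have hcs := real_inner_le_norm (Z t - Z (t+1))
      ((x (t+1) - Z (t+1)) + (x (t+1) - Z t))
    have hprod : ‖Z t - Z (t+1)‖ * ‖(x (t+1) - Z (t+1)) + (x (t+1) - Z t)‖
        ≤ ((m:ℝ) * (μ t - μ (t+1)) * Real.sqrt m) * (2 * Real.sqrt m) :=
      mul_le_mul hnd hsum (norm_nonneg _) (by positivity)
    have hss : Real.sqrt m * Real.sqrt m = m := Real.mul_self_sqrt hM0.le
    have heqq : ((m:ℝ) * (μ t - μ (t+1)) * Real.sqrt m) * (2 * Real.sqrt m)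
        = (2*(m:ℝ)^2) * (μ t - μ (t+1)) := by
      linear_combination (2*(m:ℝ)*(μ t - μ (t+1))) * hss
    have hDt : D (t+1) = ‖x (t+1) - Z (t+1)‖^2 := rfl
    have hEt : E t = ‖x (t+1) - Z t‖^2 := rfl
    rw [hDt, hEt]
    linarith [hid, hcs, hprod, heqq.le, heqq.ge]
  -- assemble
  simp only [hZfold]
  rcases Nat.eq_zero_or_pos T with hT0 | hT1
  · subst hT0
    simp only [show Finset.Icc 1 0 = (∅ : Finset ℕ) from rfl, Finset.sum_empty, mul_zero, add_zero]
    have := hγpos 0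
    positivity
  · have hD' : ∀ t ∈ Icc 1 T, D t ≤ (m:ℝ) := by
      intro t ht
      exact box_norm_sub _ _ (hXbox _ (hxX t ht))
        (hXbox _ (hZmem t (Finset.mem_Icc.mp ht).1))
    have hE0' : ∀ t ∈ Icc 1 T, 0 ≤ E t := fun t _ => sq_nonneg _
    have hEM' : ∀ t ∈ Icc 1 T, E t ≤ (m:ℝ) := by
      intro t ht
      exact box_norm_sub _ _ (hXbox _ (hxmem t ht).1)
        (hXbox _ (hZmem t (Finset.mem_Icc.mp ht).1))
    have hA := ogd_sum_aux (m:ℝ) (2*(m:ℝ)^2) (by positivity) γ μ D E hγpos hγanti hμanti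
      T hT1 hD' hE0' hEM' hdrift
    have hA2 : ((m:ℝ)/2 + (2*(m:ℝ)^2) * (μ 1 - μ T)/2)/γ T ≤ 2*(m:ℝ)/γ T := by
      gcongr
      · exact (hγpos T).le
      · have hmμ1 := hμle 1 (le_refl 1)
        nlinarith [hμpos T, mul_nonneg (sq_nonneg (m:ℝ)) (hμpos T).le,
          mul_le_mul_of_nonneg_left hmμ1 hM0.le]
    have hsum1 : ∑ t ∈ Icc 1 T, ⟪chat t, x t - Z t⟫
        ≤ ∑ t ∈ Icc 1 T, ((D t - E t)/(2*γ t) + γ t * ((m:ℝ)*cmax^2/μ t^2)/2) :=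
      Finset.sum_le_sum hstep
    rw [Finset.sum_add_distrib] at hsum1
    have hB : ∑ t ∈ Icc 1 T, γ t * ((m:ℝ)*cmax^2/μ t^2)/2
        ≤ (m:ℝ)*cmax^2 * ∑ t ∈ Icc 1 T, γ t/μ t^2 := by
      rw [Finset.mul_sum]
      apply Finset.sum_le_sum
      intro t _
      have heq : γ t * ((m:ℝ)*cmax^2/μ t^2)/2 = ((m:ℝ)*cmax^2) * (γ t/μ t^2) /2 := by ring
      rw [heq]
      have h0 : 0 ≤ ((m:ℝ)*cmax^2) * (γ t/μ t^2) := by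
        have := hγpos t; have := hμpos t; positivity
      linarith
    linarith [hA, hA2, hB, hsum1]
end

section
/- Let (Ω, 𝓕, P) be a probability space with a filtration (𝓕_t)_{t=0}^T, let E be a finite set with |E| = m, let c_max ≥ 0, and let μ_1 ≥ μ_2 ≥ … ≥ μ_T > 0. For each t ∈ {1,…,T}, let x^t, w^t : Ω → [0,1]^E and c^t : Ω → [0, c_max]^E be 𝓕_{t−1}-measurable, and let ĉ^t : Ω → ℝ^E be 𝓕_t-measurable with ‖ĉ^t‖_∞ ≤ c_max/μ_t almost surely and E[ĉ^t | 𝓕_{t−1}] = c^t. Then for every δ ∈ (0,1), with probability at least 1 − δ, Σ_{t=1}^T ⟨c^t − ĉ^t, x^t − w^t⟩ ≤ 2 m c_max (1 + 1/μ_T) √(2 T log(1/δ)). -/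
open MeasureTheory Finset ProbabilityTheory

section Helpers
variable {Ω : Type*} {mΩ : MeasurableSpace Ω} {P : Measure Ω}

lemma integrable_of_bdd [IsFiniteMeasure P] {f : Ω → ℝ} {C : ℝ}
    (hf : AEStronglyMeasurable f P)
    (h : ∀ ω, |f ω| ≤ C) : Integrable f P :=
  (integrable_const C).mono' hf (ae_of_all _ fun ω => by
    rw [Real.norm_eq_abs]; exact h ω)

lemma one_le_prob_of_ae {s : Set Ω} [IsProbabilityMeasure P]
    (h : ∀ᵐ ω ∂P, ω ∈ s) : 1 ≤ P s := by
  have hc : P sᶜ = 0 := by rwa [ae_iff] at h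
  calc (1:ENNReal) = P Set.univ := (measure_univ (μ := P)).symm
    _ = P (s ∪ sᶜ) := by rw [Set.union_compl_self]
    _ ≤ P s + P sᶜ := measure_union_le _ _
    _ = P s := by rw [hc, add_zero]

end Helpers

lemma exp_le_cosh_add {K d l : ℝ} (hK : 0 < K) (hd : |d| ≤ K) :
    Real.exp (l * d) ≤ Real.cosh (l * K) + (Real.sinh (l * K) / K) * d := by
  obtain ⟨hd1, hd2⟩ := abs_le.mp hd
  have ha : (0:ℝ) ≤ (K - d) / (2 * K) := by apply div_nonneg (by linarith) (by linarith)
  have hb : (0:ℝ) ≤ (K + d) / (2 * K) := by apply div_nonneg (by linarith) (by linarith)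
  have hab : (K - d) / (2 * K) + (K + d) / (2 * K) = 1 := by field_simp; ring
  have h := convexOn_exp.2 (Set.mem_univ (-(l * K))) (Set.mem_univ (l * K)) ha hb hab
  simp only [smul_eq_mul] at h
  have harg : (K - d) / (2 * K) * -(l * K) + (K + d) / (2 * K) * (l * K) = l * d := by
    field_simp; ring
  rw [harg] at h
  refine h.trans_eq ?_
  rw [Real.cosh_eq, Real.sinh_eq]
  field_simp
  ring

lemma azuma_mgf {Ω : Type*} {mΩ : MeasurableSpace Ω} (P : Measure Ω) [IsProbabilityMeasure P]
    (𝓕 : Filtration ℕ mΩ) (D : ℕ → Ω → ℝ) (K l : ℝ) (hK : 0 < K)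
    (hmeas : ∀ t, Measurable[𝓕 t] (D t))
    (hbdd : ∀ t ω, |D t ω| ≤ K)
    (hmart : ∀ t, P[D (t+1) | 𝓕 t] =ᵐ[P] 0) :
    ∀ n, ∫ ω, Real.exp (l * ∑ t ∈ Icc 1 n, D t ω) ∂P ≤ (Real.cosh (l * K)) ^ n := by
  intro n
  induction n with
  | zero => simp [Finset.Icc_eq_empty (by omega : ¬ (1:ℕ) ≤ 0)]
  | succ n ih =>
    set A := Real.cosh (l * K) with hA
    have hA0 : 0 < A := Real.cosh_pos _
    set Sn : Ω → ℝ := fun ω => ∑ t ∈ Icc 1 n, D t ω with hSn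
    set f : Ω → ℝ := fun ω => Real.exp (l * Sn ω) with hf
    set g : Ω → ℝ := fun ω => Real.exp (l * D (n+1) ω) with hg
    have hsum : ∀ ω, Real.exp (l * ∑ t ∈ Icc 1 (n+1), D t ω) = f ω * g ω := by
      intro ω
      rw [Finset.sum_Icc_succ_top (by omega : 1 ≤ n + 1), mul_add, Real.exp_add]
    have hSn_meas : Measurable[𝓕 n] Sn := by
      apply Finset.measurable_sum
      intro t ht
      exact (hmeas t).mono (𝓕.mono (Finset.mem_Icc.mp ht).2) le_rfl
    have hf_sm : StronglyMeasurable[𝓕 n] f :=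
      ((hSn_meas.const_mul l).exp).stronglyMeasurable
    have hf_meas : Measurable f := ((hSn_meas.const_mul l).exp).mono (𝓕.le n) le_rfl
    have hg_meas : Measurable g :=
      (((hmeas (n+1)).const_mul l).exp).mono (𝓕.le (n+1)) le_rfl
    have hD_meas : Measurable (D (n+1)) := (hmeas (n+1)).mono (𝓕.le (n+1)) le_rfl
    have hf_bound : ∀ ω, ‖f ω‖ ≤ Real.exp (|l| * (n * K)) := by
      intro ω
      rw [Real.norm_eq_abs, Real.abs_exp, Real.exp_le_exp]
      calc l * Sn ω ≤ |l * Sn ω| := le_abs_self _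
        _ = |l| * |Sn ω| := abs_mul _ _
        _ ≤ |l| * (n * K) := by
            apply mul_le_mul_of_nonneg_left _ (abs_nonneg l)
            calc |Sn ω| ≤ ∑ t ∈ Icc 1 n, |D t ω| := Finset.abs_sum_le_sum_abs _ _
              _ ≤ ∑ _t ∈ Icc 1 n, K := Finset.sum_le_sum fun t _ => hbdd t ω
              _ = n * K := by simp [Nat.card_Icc]
    have hg_bound : ∀ ω, ‖g ω‖ ≤ Real.exp (|l| * K) := by
      intro ω
      rw [Real.norm_eq_abs, Real.abs_exp, Real.exp_le_exp]
      calc l * D (n+1) ω ≤ |l * D (n+1) ω| := le_abs_self _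
        _ = |l| * |D (n+1) ω| := abs_mul _ _
        _ ≤ |l| * K := mul_le_mul_of_nonneg_left (hbdd _ _) (abs_nonneg l)
    have hf_int : Integrable f P :=
      (integrable_const _).mono' hf_meas.aestronglyMeasurable (ae_of_all _ hf_bound)
    have hg_int : Integrable g P :=
      (integrable_const _).mono' hg_meas.aestronglyMeasurable (ae_of_all _ hg_bound)
    have hfg_int : Integrable (f * g) P := by
      refine (integrable_const (Real.exp (|l| * (n * K)) * Real.exp (|l| * K))).mono'
        (hf_meas.mul hg_meas).aestronglyMeasurable (ae_of_all _ fun ω => ?_)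
      calc ‖f ω * g ω‖ = ‖f ω‖ * ‖g ω‖ := norm_mul _ _
        _ ≤ _ := by
            exact mul_le_mul (hf_bound ω) (hg_bound ω) (norm_nonneg _) (Real.exp_nonneg _)
    have hD_int : Integrable (D (n+1)) P :=
      (integrable_const K).mono' hD_meas.aestronglyMeasurable
        (ae_of_all _ fun ω => by rw [Real.norm_eq_abs]; exact hbdd _ _)
    have hcond : P[g | 𝓕 n] ≤ᵐ[P] fun _ => A := by
      have hpt : g ≤ᵐ[P] fun ω => A + (Real.sinh (l * K) / K) * D (n+1) ω :=
        ae_of_all _ fun ω => exp_le_cosh_add hK (hbdd _ _)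
      have h1 : Integrable (fun ω => A + (Real.sinh (l * K) / K) * D (n+1) ω) P :=
        (integrable_const _).add (hD_int.const_mul _)
      refine (condExp_mono hg_int h1 hpt).trans (Filter.EventuallyEq.le ?_)
      have h2 : (fun ω => A + (Real.sinh (l * K) / K) * D (n+1) ω)
          = (fun _ => A) + (Real.sinh (l * K) / K) • (D (n+1)) := by
        funext ω; simp [smul_eq_mul]
      rw [h2]
      calc P[(fun _ => A) + (Real.sinh (l * K) / K) • (D (n+1)) | 𝓕 n]
          =ᵐ[P] P[(fun _ => A) | 𝓕 n] + P[(Real.sinh (l * K) / K) • (D (n+1)) | 𝓕 n] :=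
            condExp_add (integrable_const _) (hD_int.smul _) _
        _ =ᵐ[P] (fun _ => A) + (Real.sinh (l * K) / K) • P[D (n+1) | 𝓕 n] :=
            Filter.EventuallyEq.add
              (Filter.EventuallyEq.of_eq (condExp_const (𝓕.le n) A))
              (condExp_smul _ _ _)
        _ =ᵐ[P] fun _ => A := by
            filter_upwards [hmart n] with ω hω
            simp [Pi.add_apply, Pi.smul_apply, hω]
    calc ∫ ω, Real.exp (l * ∑ t ∈ Icc 1 (n+1), D t ω) ∂P
        = ∫ ω, (f * g) ω ∂P := by
          apply integral_congr_ae (ae_of_all _ fun ω => ?_)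
          exact hsum ω
      _ = ∫ ω, (P[f * g | 𝓕 n]) ω ∂P := (integral_condExp (𝓕.le n)).symm
      _ = ∫ ω, (f * P[g | 𝓕 n]) ω ∂P :=
          integral_congr_ae (condExp_mul_of_stronglyMeasurable_left hf_sm hfg_int hg_int)
      _ ≤ ∫ ω, f ω * A ∂P := by
          apply integral_mono_ae
          · exact integrable_condExp.bdd_mul (c := Real.exp (|l| * (n * K))) hf_meas.aestronglyMeasurable
              (ae_of_all _ fun ω => hf_bound ω)
          · exact hf_int.mul_const A
          · filter_upwards [hcond] with ω hω
            exact mul_le_mul_of_nonneg_left hω (Real.exp_nonneg _)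
      _ = (∫ ω, f ω ∂P) * A := integral_mul_const A f
      _ ≤ A ^ n * A := mul_le_mul_of_nonneg_right ih hA0.le
      _ = A ^ (n + 1) := (pow_succ A n).symm

/-- **Martingale concentration for the estimator gap.**
`(𝓕_t)` is a filtration; `x^t, w^t ∈ [0,1]^E` and `c^t ∈ [0, cmax]^E` are
`𝓕_{t-1}`-measurable; the estimators `ĉ^t` are `𝓕_t`-measurable with
`‖ĉ^t‖_∞ ≤ cmax/μ_t` a.s. and `E[ĉ^t | 𝓕_{t-1}] = c^t`; the `μ_t` are
positive and nonincreasing. Then with probability at least `1 - δ`,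
`∑_{t=1}^T ⟨c^t - ĉ^t, x^t - w^t⟩ ≤ 2 m cmax (1 + 1/μ_T) √(2T log(1/δ))`. -/
theorem estimator_gap_concentration
    {Ω : Type*} {mΩ : MeasurableSpace Ω} (P : Measure Ω) [IsProbabilityMeasure P]
    (𝓕 : Filtration ℕ mΩ)
    {E : Type*} [Fintype E]
    (T : ℕ) (hT : 1 ≤ T) (cmax : ℝ) (hcmax : 0 ≤ cmax)
    (μ : ℕ → ℝ) (hμpos : ∀ t ∈ Icc 1 T, 0 < μ t)
    (hμanti : ∀ t₁ ∈ Icc 1 T, ∀ t₂ ∈ Icc 1 T, t₁ ≤ t₂ → μ t₂ ≤ μ t₁)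
    (x w c chat : ℕ → Ω → E → ℝ)
    (hx_meas : ∀ t ∈ Icc 1 T, ∀ e : E, Measurable[𝓕 (t - 1)] fun ω => x t ω e)
    (hx_mem : ∀ t ∈ Icc 1 T, ∀ ω, ∀ e : E, x t ω e ∈ Set.Icc (0:ℝ) 1)
    (hw_meas : ∀ t ∈ Icc 1 T, ∀ e : E, Measurable[𝓕 (t - 1)] fun ω => w t ω e)
    (hw_mem : ∀ t ∈ Icc 1 T, ∀ ω, ∀ e : E, w t ω e ∈ Set.Icc (0:ℝ) 1)
    (hc_meas : ∀ t ∈ Icc 1 T, ∀ e : E, Measurable[𝓕 (t - 1)] fun ω => c t ω e)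
    (hc_mem : ∀ t ∈ Icc 1 T, ∀ ω, ∀ e : E, c t ω e ∈ Set.Icc 0 cmax)
    (hchat_meas : ∀ t ∈ Icc 1 T, ∀ e : E, Measurable[𝓕 t] fun ω => chat t ω e)
    (hchat_bdd : ∀ t ∈ Icc 1 T, ∀ᵐ ω ∂P, ∀ e : E, |chat t ω e| ≤ cmax / μ t)
    (hchat_unbiased : ∀ t ∈ Icc 1 T, ∀ e : E,
      P[(fun ω => chat t ω e) | 𝓕 (t - 1)] =ᵐ[P] fun ω => c t ω e)
    (δ : ℝ) (hδ : δ ∈ Set.Ioo (0:ℝ) 1) :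
    ENNReal.ofReal (1 - δ) ≤
      P {ω | ∑ t ∈ Icc 1 T, ∑ e : E,
            (c t ω e - chat t ω e) * (x t ω e - w t ω e) ≤
          2 * (Fintype.card E : ℝ) * cmax * (1 + 1 / μ T) *
            Real.sqrt (2 * T * Real.log (1 / δ))} := by
  classical
  obtain ⟨hδ0, hδ1⟩ := hδ
  have hTmem : T ∈ Icc 1 T := mem_Icc.mpr ⟨hT, le_rfl⟩
  have hμT : 0 < μ T := hμpos T hTmem
  set m : ℝ := (Fintype.card E : ℝ) with hm
  have hm0 : 0 ≤ m := Nat.cast_nonneg _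
  set K : ℝ := m * cmax * (1 + 1 / μ T) with hKdef
  have hK0 : 0 ≤ K := by
    apply mul_nonneg (mul_nonneg hm0 hcmax)
    have : 0 ≤ 1 / μ T := by positivity
    linarith
  set L : ℝ := Real.log (1 / δ) with hLdef
  have hL : 0 < L := Real.log_pos ((one_lt_div hδ0).mpr hδ1)
  set s : ℝ := Real.sqrt (2 * T * L) with hsdef
  have hs0 : 0 ≤ s := Real.sqrt_nonneg _
  have hs2 : s ^ 2 = 2 * T * L := Real.sq_sqrt (by positivity)
  set a : ℝ := 2 * m * cmax * (1 + 1 / μ T) * s with hadef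
  have ha : a = 2 * K * s := by rw [hadef, hKdef]; ring
  -- truncated estimator
  set chat' : ℕ → Ω → E → ℝ :=
    fun t ω e => max (-(cmax / μ t)) (min (cmax / μ t) (chat t ω e)) with hchat'def
  have hchat'_bdd : ∀ t ∈ Icc 1 T, ∀ ω, ∀ e : E, |chat' t ω e| ≤ cmax / μ t := by
    intro t ht ω e
    have hB : 0 ≤ cmax / μ t := div_nonneg hcmax (hμpos t ht).le
    rw [abs_le]
    constructor
    · exact le_max_left _ _
    · exact max_le (by linarith) (min_le_left _ _)
  have hchat'_eq : ∀ t ∈ Icc 1 T, ∀ᵐ ω ∂P, ∀ e : E, chat' t ω e = chat t ω e := by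
    intro t ht
    filter_upwards [hchat_bdd t ht] with ω hω e
    obtain ⟨h1, h2⟩ := abs_le.mp (hω e)
    rw [hchat'def]
    simp only
    rw [min_eq_right h2, max_eq_right h1]
  have hchat'_meas : ∀ t ∈ Icc 1 T, ∀ e : E, Measurable[𝓕 t] fun ω => chat' t ω e := by
    intro t ht e
    exact measurable_const.max (measurable_const.min (hchat_meas t ht e))
  -- the difference sequence
  set D : ℕ → Ω → ℝ := fun t ω =>
    if t ∈ Icc 1 T then
      ∑ e : E, (x t ω e - w t ω e) * (c t ω e - chat' t ω e) else 0 with hDdef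
  have hD_meas : ∀ t, Measurable[𝓕 t] (D t) := by
    intro t
    by_cases ht : t ∈ Icc 1 T
    · simp only [hDdef, if_pos ht]
      apply Finset.measurable_sum
      intro e _
      have h1 : Measurable[𝓕 t] fun ω => x t ω e - w t ω e :=
        ((hx_meas t ht e).sub (hw_meas t ht e)).mono (𝓕.mono (Nat.sub_le t 1)) le_rfl
      have h2 : Measurable[𝓕 t] fun ω => c t ω e - chat' t ω e :=
        ((hc_meas t ht e).mono (𝓕.mono (Nat.sub_le t 1)) le_rfl).sub (hchat'_meas t ht e)
      exact h1.mul h2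
    · simp only [hDdef, if_neg ht]
      exact measurable_const
  -- per-term bound
  have hterm_bdd : ∀ t ∈ Icc 1 T, ∀ ω, ∀ e : E,
      |(x t ω e - w t ω e) * (c t ω e - chat' t ω e)| ≤ cmax * (1 + 1 / μ T) := by
    intro t ht ω e
    obtain ⟨hx0, hx1⟩ := hx_mem t ht ω e
    obtain ⟨hw0, hw1⟩ := hw_mem t ht ω e
    obtain ⟨hc0, hc1⟩ := hc_mem t ht ω e
    have h1 : |x t ω e - w t ω e| ≤ 1 := abs_le.mpr ⟨by linarith, by linarith⟩
    have h2 : |c t ω e - chat' t ω e| ≤ cmax + cmax / μ T := by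
      have h3 := hchat'_bdd t ht ω e
      have h4 : cmax / μ t ≤ cmax / μ T := by
        apply div_le_div_of_nonneg_left hcmax hμT
        exact hμanti t ht T hTmem (mem_Icc.mp ht).2
      calc |c t ω e - chat' t ω e| ≤ |c t ω e| + |chat' t ω e| := abs_sub _ _
        _ ≤ cmax + cmax / μ T := by
            have : |c t ω e| ≤ cmax := abs_le.mpr ⟨by linarith, hc1⟩
            linarith
    calc |(x t ω e - w t ω e) * (c t ω e - chat' t ω e)|
        = |x t ω e - w t ω e| * |c t ω e - chat' t ω e| := abs_mul _ _
      _ ≤ 1 * (cmax + cmax / μ T) := by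
          apply mul_le_mul h1 h2 (abs_nonneg _) zero_le_one
      _ = cmax * (1 + 1 / μ T) := by ring
  -- martingale difference bound
  have hD_bdd0 : ∀ t ω, |D t ω| ≤ K := by
    intro t ω
    by_cases ht : t ∈ Icc 1 T
    · simp only [hDdef, if_pos ht]
      calc |∑ e : E, (x t ω e - w t ω e) * (c t ω e - chat' t ω e)|
          ≤ ∑ e : E, |(x t ω e - w t ω e) * (c t ω e - chat' t ω e)| :=
            Finset.abs_sum_le_sum_abs _ _
        _ ≤ ∑ _e : E, cmax * (1 + 1 / μ T) :=
            Finset.sum_le_sum fun e _ => hterm_bdd t ht ω e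
        _ = K := by rw [Finset.sum_const, Finset.card_univ, nsmul_eq_mul, hKdef, hm]; ring
    · simp only [hDdef, if_neg ht, abs_zero]
      exact hK0
  -- the martingale property
  have hD_mart : ∀ t, P[D (t+1) | 𝓕 t] =ᵐ[P] 0 := by
    intro t
    by_cases ht : t + 1 ∈ Icc 1 T
    · have htm1 : t + 1 - 1 = t := by omega
      -- integrability helpers
      have hxw_meas : ∀ e : E, Measurable fun ω => x (t+1) ω e - w (t+1) ω e := by
        intro e
        exact ((hx_meas (t+1) ht e).sub (hw_meas (t+1) ht e)).mono (𝓕.le _) le_rfl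
      have hc_meas' : ∀ e : E, Measurable fun ω => c (t+1) ω e :=
        fun e => (hc_meas (t+1) ht e).mono (𝓕.le _) le_rfl
      have hchat'_meas' : ∀ e : E, Measurable fun ω => chat' (t+1) ω e :=
        fun e => (hchat'_meas (t+1) ht e).mono (𝓕.le _) le_rfl
      have hc_int : ∀ e : E, Integrable (fun ω => c (t+1) ω e) P := by
        intro e
        apply integrable_of_bdd (hc_meas' e).aestronglyMeasurable (C := cmax)
        intro ω
        obtain ⟨h1, h2⟩ := hc_mem (t+1) ht ω e
        exact abs_le.mpr ⟨by linarith, h2⟩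
      have hchat'_int : ∀ e : E, Integrable (fun ω => chat' (t+1) ω e) P := by
        intro e
        exact integrable_of_bdd (hchat'_meas' e).aestronglyMeasurable
          (fun ω => hchat'_bdd (t+1) ht ω e)
      have hdiff_int : ∀ e : E, Integrable (fun ω => c (t+1) ω e - chat' (t+1) ω e) P :=
        fun e => (hc_int e).sub (hchat'_int e)
      have hprod_int : ∀ e : E, Integrable
          (fun ω => (x (t+1) ω e - w (t+1) ω e) * (c (t+1) ω e - chat' (t+1) ω e)) P := by
        intro e
        apply integrable_of_bdd ((hxw_meas e).mul
          ((hc_meas' e).sub (hchat'_meas' e))).aestronglyMeasurable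
          (C := cmax * (1 + 1 / μ T))
        intro ω
        exact hterm_bdd (t+1) ht ω e
      have hDeq : D (t+1) = ∑ e : E, fun ω =>
          (x (t+1) ω e - w (t+1) ω e) * (c (t+1) ω e - chat' (t+1) ω e) := by
        funext ω
        simp only [hDdef, if_pos ht, Finset.sum_apply]
      rw [hDeq]
      calc P[∑ e : E, fun ω => (x (t+1) ω e - w (t+1) ω e) * (c (t+1) ω e - chat' (t+1) ω e) | 𝓕 t]
          =ᵐ[P] ∑ e : E, P[fun ω =>
            (x (t+1) ω e - w (t+1) ω e) * (c (t+1) ω e - chat' (t+1) ω e) | 𝓕 t] :=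
            condExp_finsetSum (fun e _ => hprod_int e) _
        _ =ᵐ[P] 0 := by
            have hterm : ∀ e : E, P[fun ω =>
                (x (t+1) ω e - w (t+1) ω e) * (c (t+1) ω e - chat' (t+1) ω e) | 𝓕 t]
                =ᵐ[P] 0 := by
              intro e
              have hf_sm : StronglyMeasurable[𝓕 t] fun ω => x (t+1) ω e - w (t+1) ω e := by
                have := ((hx_meas (t+1) ht e).sub (hw_meas (t+1) ht e))
                rw [htm1] at this
                exact this.stronglyMeasurable
              have hpull := condExp_mul_of_stronglyMeasurable_left (μ := P) hf_sm
                (by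
                  have := hprod_int e
                  exact this)
                (hdiff_int e)
              refine hpull.trans ?_
              have hcond0 : P[fun ω => c (t+1) ω e - chat' (t+1) ω e | 𝓕 t] =ᵐ[P] 0 := by
                have hsub := condExp_sub (μ := P) (m := 𝓕 t) (hc_int e) (hchat'_int e)
                refine hsub.trans ?_
                have h1 : P[fun ω => c (t+1) ω e | 𝓕 t] = fun ω => c (t+1) ω e := by
                  apply condExp_of_stronglyMeasurable (𝓕.le t)
                  · have := hc_meas (t+1) ht e
                    rw [htm1] at this
                    exact this.stronglyMeasurable
                  · exact hc_int e
                have h2 : P[fun ω => chat' (t+1) ω e | 𝓕 t] =ᵐ[P] fun ω => c (t+1) ω e := by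
                  have he : (fun ω => chat' (t+1) ω e) =ᵐ[P] fun ω => chat (t+1) ω e := by
                    filter_upwards [hchat'_eq (t+1) ht] with ω hω
                    exact hω e
                  refine (condExp_congr_ae he).trans ?_
                  have := hchat_unbiased (t+1) ht e
                  rw [htm1] at this
                  exact this
                rw [h1]
                filter_upwards [h2] with ω hω
                simp only [Pi.sub_apply, Pi.zero_apply, hω, sub_self]
              filter_upwards [hcond0] with ω hω
              simp only [Pi.mul_apply, Pi.zero_apply, hω, mul_zero]
            have hall2 : ∀ᵐ ω ∂P, ∀ e : E, (P[fun ω =>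
                (x (t+1) ω e - w (t+1) ω e) * (c (t+1) ω e - chat' (t+1) ω e) | 𝓕 t]) ω = 0 := by
              rw [ae_all_iff]
              intro e
              filter_upwards [hterm e] with ω hω
              exact hω
            filter_upwards [hall2] with ω hω
            simp only [Finset.sum_apply, Pi.zero_apply]
            exact Finset.sum_eq_zero fun e _ => hω e
    · have hzero : D (t+1) = (0 : Ω → ℝ) := by
        funext ω
        simp only [hDdef, if_neg ht, Pi.zero_apply]
      rw [hzero, condExp_zero]
  -- sums agree a.e.
  set S' : Ω → ℝ := fun ω => ∑ t ∈ Icc 1 T, D t ω with hS'def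
  have hS'_meas : Measurable S' := by
    apply Finset.measurable_sum
    intro t _
    exact (hD_meas t).mono (𝓕.le t) le_rfl
  have hS'_bdd : ∀ ω, |S' ω| ≤ T * K := by
    intro ω
    calc |S' ω| ≤ ∑ t ∈ Icc 1 T, |D t ω| := Finset.abs_sum_le_sum_abs _ _
      _ ≤ ∑ _t ∈ Icc 1 T, K := Finset.sum_le_sum fun t _ => hD_bdd0 t ω
      _ = T * K := by simp [Nat.card_Icc]
  have hae : ∀ᵐ ω ∂P, (∑ t ∈ Icc 1 T, ∑ e : E,
      (c t ω e - chat t ω e) * (x t ω e - w t ω e)) = S' ω := by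
    have hall : ∀ᵐ ω ∂P, ∀ t, t ∈ Icc 1 T → ∀ e : E, chat' t ω e = chat t ω e := by
      rw [ae_all_iff]
      intro t
      by_cases ht : t ∈ Icc 1 T
      · filter_upwards [hchat'_eq t ht] with ω hω _
        exact hω
      · exact ae_of_all _ fun ω h => absurd h ht
    filter_upwards [hall] with ω hω
    apply Finset.sum_congr rfl
    intro t ht
    show _ = D t ω
    simp only [hDdef]
    rw [if_pos ht]
    apply Finset.sum_congr rfl
    intro e _
    rw [hω t ht e]
    ring
  -- case split on K
  rcases eq_or_lt_of_le hK0 with hKz | hKpos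
  · -- degenerate case : K = 0
    have hterm0 : ∀ t ∈ Icc 1 T, ∀ ω, D t ω = 0 := by
      intro t ht ω
      have := hD_bdd0 t ω
      rw [← hKz] at this
      exact abs_eq_zero.mp (le_antisymm this (abs_nonneg _))
    refine le_trans (ENNReal.ofReal_le_one.mpr (by linarith)) ?_
    apply one_le_prob_of_ae
    filter_upwards [hae] with ω hω
    show _ ≤ _
    rw [hω]
    have hz : S' ω = 0 := Finset.sum_eq_zero fun t ht => hterm0 t ht ω
    rw [hz, ha, ← hKz]
    norm_num
  · -- main case : K > 0
    set l : ℝ := s / (T * K) with hldef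
    have hT0 : (0:ℝ) < T := by exact_mod_cast Nat.lt_of_lt_of_le Nat.zero_lt_one hT
    have hl0 : 0 ≤ l := div_nonneg hs0 (by positivity)
    -- MGF bound
    have hmgf := azuma_mgf P 𝓕 D K l hKpos hD_meas hD_bdd0 hD_mart T
    -- Chernoff
    have hexp_int : Integrable (fun ω => Real.exp (l * S' ω)) P := by
      apply integrable_of_bdd (C := Real.exp (|l| * (T * K)))
      · exact ((hS'_meas.const_mul l).exp).aestronglyMeasurable
      · intro ω
        rw [Real.abs_exp, Real.exp_le_exp]
        calc l * S' ω ≤ |l * S' ω| := le_abs_self _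
          _ = |l| * |S' ω| := abs_mul _ _
          _ ≤ |l| * (T * K) := mul_le_mul_of_nonneg_left (hS'_bdd ω) (abs_nonneg _)
    have htail := measure_ge_le_exp_mul_mgf (μ := P) (X := S') a hl0 hexp_int
    have hmgf_le : mgf S' P l ≤ Real.exp (T * (l * K) ^ 2 / 2) := by
      calc mgf S' P l = ∫ ω, Real.exp (l * S' ω) ∂P := rfl
        _ ≤ Real.cosh (l * K) ^ T := hmgf
        _ ≤ Real.exp ((l * K) ^ 2 / 2) ^ T := by
            apply pow_le_pow_left₀ (Real.cosh_pos _).le (Real.cosh_le_exp_half_sq _)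
        _ = Real.exp (T * (l * K) ^ 2 / 2) := by
            rw [← Real.exp_nat_mul]
            ring_nf
    have harith : Real.exp (-l * a) * Real.exp (T * (l * K) ^ 2 / 2) ≤ δ := by
      rw [← Real.exp_add]
      have hKne : K ≠ 0 := ne_of_gt hKpos
      have hTne : (T:ℝ) ≠ 0 := ne_of_gt hT0
      have hlK : l * K = s / T := by
        rw [hldef]; field_simp
      have h1 : -l * a + T * (l * K) ^ 2 / 2 = -3 * L := by
        have e1 : -l * a = -2 * s ^ 2 / T := by
          rw [ha, hldef]; field_simp
        have e2 : (T:ℝ) * (l * K) ^ 2 / 2 = s ^ 2 / (2 * T) := by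
          rw [hlK]; field_simp
        rw [e1, e2, hs2]
        field_simp
        ring
      rw [h1]
      have h2 : L = -Real.log δ := by
        rw [hLdef, one_div, Real.log_inv]
      rw [h2]
      have : Real.exp (-3 * -Real.log δ) = δ ^ (3:ℕ) := by
        rw [show (-3 : ℝ) * -Real.log δ = (3:ℕ) * Real.log δ by push_cast; ring,
          Real.exp_nat_mul, Real.exp_log hδ0]
      rw [this]
      calc δ ^ (3:ℕ) ≤ δ ^ (1:ℕ) := pow_le_pow_of_le_one hδ0.le hδ1.le (by norm_num)
        _ = δ := pow_one δ
    have htail2 : (P {ω | a ≤ S' ω}).toReal ≤ δ := by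
      refine htail.trans ?_
      calc Real.exp (-l * a) * mgf S' P l
          ≤ Real.exp (-l * a) * Real.exp (T * (l * K) ^ 2 / 2) :=
            mul_le_mul_of_nonneg_left hmgf_le (Real.exp_nonneg _)
        _ ≤ δ := harith
    have htail3 : P {ω | a < S' ω} ≤ ENNReal.ofReal δ := by
      refine le_trans (measure_mono fun ω (hω : a < S' ω) => le_of_lt hω) ?_
      exact (ENNReal.le_ofReal_iff_toReal_le (measure_ne_top _ _) hδ0.le).mpr htail2
    -- conclude
    have hset : MeasurableSet {ω | S' ω ≤ a} := measurableSet_le hS'_meas measurable_const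
    have hsplit : P {ω | S' ω ≤ a} + P {ω | a < S' ω} = 1 := by
      have h := measure_add_measure_compl (μ := P) hset
      rw [measure_univ] at h
      rwa [show {ω | S' ω ≤ a}ᶜ = {ω | a < S' ω} by
        ext ω; simp [not_le]] at h
    have hone : ENNReal.ofReal (1 - δ) + ENNReal.ofReal δ = 1 := by
      rw [← ENNReal.ofReal_add (by linarith) hδ0.le]
      norm_num
    have hgoal' : ENNReal.ofReal (1 - δ) ≤ P {ω | S' ω ≤ a} := by
      have h1 : ENNReal.ofReal (1 - δ) = 1 - ENNReal.ofReal δ :=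
        ENNReal.eq_sub_of_add_eq ENNReal.ofReal_ne_top hone
      have h2 : P {ω | S' ω ≤ a} = 1 - P {ω | a < S' ω} :=
        ENNReal.eq_sub_of_add_eq (measure_ne_top _ _) hsplit
      rw [h1, h2]
      exact tsub_le_tsub_left htail3 1
    refine le_trans hgoal' (le_of_eq ?_)
    apply measure_congr
    rw [Filter.eventuallyEq_set]
    filter_upwards [hae] with ω hω
    show (S' ω ≤ a) ↔ _
    rw [hω]
end

section
/- (Smoothness of the fractional potential.) Assume 0 ≤ c_e(ℓ) ≤ c_max for every e ∈ E and every ℓ ∈ {0,…,n}. Then the gradient of Φ is Lipschitz with constant 2 n² c_max √m on the box: for all x, x' with x_{j,e}, x'_{j,e} ∈ [0,1] for every agent j and resource e, ‖∇Φ(x) − ∇Φ(x')‖₂ ≤ 2 n² c_max √m · ‖x − x'‖₂, where ∇Φ denotes the gradient of Φ with respect to the Euclidean inner product on ℝ^{n·m}. -/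
/-!
For each resource `e`, the potential is the multilinear extension of the set function
`S ↦ ∑_{ℓ ≤ |S|} c_e(ℓ)`, so its partial derivative in `x_{i,e}` is the expected marginal increment
`c_e(|T| + 1)`, where `T` is a random set of the other agents containing each `j` independently
with probability `x_{j,e}`. Two such product Bernoulli laws are at `ℓ¹`-distance at most
`2 ∑_j |x_{j,e} - x'_{j,e}|`, so each partial derivative moves by at most `2 c_max` times that sum,
and Cauchy–Schwarz turns this into the Euclidean bound `2 n c_max ‖x - x'‖`, which is below the
claimed constant.
-/

open Finset

section BernoulliWeight

variable {ι : Type*} [DecidableEq ι]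

/-- The probability that a random subset of `T`, containing each `j` independently with probability
`a j`, equals `S ∩ T`. -/
def bernoulliWeight (T : Finset ι) (a : ι → ℝ) (S : Finset ι) : ℝ :=
  ∏ j ∈ T, if j ∈ S then a j else 1 - a j

theorem bernoulliWeight_eq_prod_mul_prod {T S : Finset ι} (a : ι → ℝ) (hST : S ⊆ T) :
    bernoulliWeight T a S = (∏ j ∈ S, a j) * ∏ j ∈ T \ S, (1 - a j) := by
  rw [bernoulliWeight, prod_ite, filter_mem_eq_inter, inter_eq_right.2 hST,
    filter_notMem_eq_sdiff]

theorem bernoulliWeight_nonneg (T S : Finset ι) {a : ι → ℝ}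
    (ha : ∀ j, a j ∈ Set.Icc (0 : ℝ) 1) : 0 ≤ bernoulliWeight T a S :=
  prod_nonneg fun j _ => by split_ifs <;> linarith [(ha j).1, (ha j).2]

theorem sum_bernoulliWeight (T : Finset ι) (a : ι → ℝ) :
    ∑ S ∈ T.powerset, bernoulliWeight T a S = 1 := by
  rw [sum_congr rfl fun S hS => bernoulliWeight_eq_prod_mul_prod a (mem_powerset.1 hS),
    ← prod_add]
  simp

theorem bernoulliWeight_insert {T : Finset ι} {k : ι} (hk : k ∉ T) (a : ι → ℝ)
    (S : Finset ι) :
    bernoulliWeight (insert k T) a S =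
      (if k ∈ S then a k else 1 - a k) * bernoulliWeight T a S :=
  prod_insert hk

theorem bernoulliWeight_insert_right {T : Finset ι} {k : ι} (hk : k ∉ T) (a : ι → ℝ)
    (S : Finset ι) : bernoulliWeight T a (insert k S) = bernoulliWeight T a S :=
  prod_congr rfl fun j hj => by simp only [mem_insert, ne_of_mem_of_not_mem hj hk, false_or]

theorem sum_abs_bernoulliWeight_sub_le (T : Finset ι) {a b : ι → ℝ}
    (ha : ∀ j, a j ∈ Set.Icc (0 : ℝ) 1) (hb : ∀ j, b j ∈ Set.Icc (0 : ℝ) 1) :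
    ∑ S ∈ T.powerset, |bernoulliWeight T a S - bernoulliWeight T b S|
      ≤ 2 * ∑ j ∈ T, |a j - b j| := by
  induction T using Finset.induction_on with
  | empty => simp [bernoulliWeight]
  | @insert k T hk ih =>
    have hkS : ∀ S ∈ T.powerset, k ∉ S := fun S hS h => hk (mem_powerset.1 hS h)
    have step : ∀ S ∈ T.powerset,
        |bernoulliWeight (insert k T) a S - bernoulliWeight (insert k T) b S|
          + |bernoulliWeight (insert k T) a (insert k S)
              - bernoulliWeight (insert k T) b (insert k S)|
        ≤ |bernoulliWeight T a S - bernoulliWeight T b S|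
          + 2 * |a k - b k| * bernoulliWeight T b S := by
      intro S hS
      simp only [bernoulliWeight_insert hk, bernoulliWeight_insert_right hk, if_neg (hkS S hS),
        if_pos (mem_insert_self k S)]
      set p := bernoulliWeight T a S
      set q := bernoulliWeight T b S
      have hq : 0 ≤ q := bernoulliWeight_nonneg T S hb
      obtain ⟨hak0, hak1⟩ := ha k
      calc |(1 - a k) * p - (1 - b k) * q| + |a k * p - b k * q|
          = |(1 - a k) * (p - q) + (b k - a k) * q| + |a k * (p - q) + (a k - b k) * q| := by
            ring_nf
        _ ≤ ((1 - a k) * |p - q| + |b k - a k| * q) + (a k * |p - q| + |a k - b k| * q) := by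
            gcongr <;> refine (abs_add_le _ _).trans_eq ?_ <;>
              simp only [abs_mul, abs_of_nonneg hq, abs_of_nonneg hak0,
                abs_of_nonneg (sub_nonneg.2 hak1)]
        _ = |p - q| + 2 * |a k - b k| * q := by rw [abs_sub_comm (b k)]; ring
    calc ∑ S ∈ (insert k T).powerset,
          |bernoulliWeight (insert k T) a S - bernoulliWeight (insert k T) b S|
        ≤ ∑ S ∈ T.powerset, (|bernoulliWeight T a S - bernoulliWeight T b S|
            + 2 * |a k - b k| * bernoulliWeight T b S) := by
          rw [sum_powerset_insert hk, ← sum_add_distrib]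
          exact sum_le_sum step
      _ ≤ 2 * ∑ j ∈ T, |a j - b j| + 2 * |a k - b k| := by
          rw [sum_add_distrib, ← mul_sum, sum_bernoulliWeight, mul_one]
          exact add_le_add_left ih _
      _ = 2 * ∑ j ∈ insert k T, |a j - b j| := by rw [sum_insert hk]; ring

theorem abs_sum_bernoulliWeight_sub_mul_le (T : Finset ι) {a b : ι → ℝ}
    (ha : ∀ j, a j ∈ Set.Icc (0 : ℝ) 1) (hb : ∀ j, b j ∈ Set.Icc (0 : ℝ) 1)
    {g : Finset ι → ℝ} {M : ℝ} (hg : ∀ S ⊆ T, |g S| ≤ M) :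
    |∑ S ∈ T.powerset, (bernoulliWeight T a S - bernoulliWeight T b S) * g S|
      ≤ 2 * M * ∑ j ∈ T, |a j - b j| := by
  have hM : 0 ≤ M := (abs_nonneg _).trans (hg ∅ (empty_subset T))
  calc _ ≤ ∑ S ∈ T.powerset, |bernoulliWeight T a S - bernoulliWeight T b S| * M :=
        (abs_sum_le_sum_abs _ _).trans <| sum_le_sum fun S hS => by
          rw [abs_mul]; exact mul_le_mul_of_nonneg_left (hg S (mem_powerset.1 hS)) (abs_nonneg _)
    _ ≤ (2 * ∑ j ∈ T, |a j - b j|) * M := by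
        rw [← sum_mul]
        exact mul_le_mul_of_nonneg_right (sum_abs_bernoulliWeight_sub_le T ha hb) hM
    _ = 2 * M * ∑ j ∈ T, |a j - b j| := by ring

end BernoulliWeight

section MultilinearExtension

variable {ι : Type*} [Fintype ι] [DecidableEq ι]

def multilinearExtension (f : Finset ι → ℝ) (a : ι → ℝ) : ℝ :=
  ∑ S ∈ univ.powerset, bernoulliWeight univ a S * f S

def multilinearExtensionPartial (f : Finset ι → ℝ) (a : ι → ℝ) (i : ι) : ℝ :=
  ∑ T ∈ (univ.erase i).powerset, bernoulliWeight (univ.erase i) a T * (f (insert i T) - f T)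

theorem hasFDerivAt_bernoulliWeight (S : Finset ι) (a : ι → ℝ) :
    HasFDerivAt (bernoulliWeight univ · S)
      (∑ i, ((if i ∈ S then 1 else -1) * bernoulliWeight (univ.erase i) a S) •
        (ContinuousLinearMap.proj i : (ι → ℝ) →L[ℝ] ℝ)) a := by
  have h := HasFDerivAt.finsetProd (𝕜 := ℝ) (u := univ) (x := a)
    (g := fun j a => if j ∈ S then a j else 1 - a j)
    (g' := fun j => if j ∈ S then ContinuousLinearMap.proj j else -ContinuousLinearMap.proj j)
    fun j _ => by
      split_ifs
      · exact hasFDerivAt_apply j a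
      · exact (hasFDerivAt_apply (𝕜 := ℝ) j a).const_sub 1
  refine h.congr_fderiv (sum_congr rfl fun i _ => ?_)
  ext v
  split_ifs <;> simp [bernoulliWeight]

theorem sum_sign_mul_bernoulliWeight_erase (f : Finset ι → ℝ) (a : ι → ℝ) (i : ι) :
    ∑ S ∈ univ.powerset, (if i ∈ S then 1 else -1) * bernoulliWeight (univ.erase i) a S * f S
      = multilinearExtensionPartial f a i := by
  have hi := notMem_erase i (univ : Finset ι)
  rw [← insert_erase (mem_univ i), sum_powerset_insert hi, insert_erase (mem_univ i),
    multilinearExtensionPartial, ← sum_add_distrib]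
  refine sum_congr rfl fun T hT => ?_
  rw [if_neg fun h => hi (mem_powerset.1 hT h), if_pos (mem_insert_self i T),
    bernoulliWeight_insert_right hi]
  ring

theorem hasFDerivAt_multilinearExtension (f : Finset ι → ℝ) (a : ι → ℝ) :
    HasFDerivAt (multilinearExtension f)
      (∑ i, multilinearExtensionPartial f a i •
        (ContinuousLinearMap.proj i : (ι → ℝ) →L[ℝ] ℝ)) a := by
  have h := HasFDerivAt.fun_sum (u := univ.powerset) fun S _ =>
    (hasFDerivAt_bernoulliWeight S a).mul_const (f S)
  refine h.congr_fderiv (ContinuousLinearMap.ext fun v => ?_)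
  simp only [_root_.sum_apply, smul_apply, smul_eq_mul, ContinuousLinearMap.proj_apply, mul_sum,
    sum_mul, ← sum_sign_mul_bernoulliWeight_erase]
  rw [sum_comm]
  exact sum_congr rfl fun i _ => sum_congr rfl fun S _ => by ring

theorem hasGradientAt_sum_multilinearExtension {κ : Type*} [Fintype κ] (f : κ → Finset ι → ℝ)
    (x : EuclideanSpace ℝ (ι × κ)) :
    HasGradientAt (fun x : EuclideanSpace ℝ (ι × κ) =>
        ∑ k, multilinearExtension (f k) fun i => x (i, k))
      (WithLp.toLp 2 fun p => multilinearExtensionPartial (f p.2) (fun i => x (i, p.2)) p.1)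
      x := by
  let column (k : κ) : EuclideanSpace ℝ (ι × κ) →L[ℝ] ι → ℝ :=
    ContinuousLinearMap.pi fun i => EuclideanSpace.proj (i, k)
  have h := HasFDerivAt.fun_sum (u := univ) fun k _ =>
    (hasFDerivAt_multilinearExtension (f k) (column k x)).comp x (column k).hasFDerivAt
  rw [hasGradientAt_iff_hasFDerivAt]
  refine h.congr_fderiv (ContinuousLinearMap.ext fun v => ?_)
  simp only [column, ContinuousLinearMap.coe_pi', PiLp.proj_apply, _root_.sum_apply,
    ContinuousLinearMap.comp_apply, smul_apply, ContinuousLinearMap.proj_apply, smul_eq_mul,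
    InnerProductSpace.toDual_apply_apply, PiLp.inner_apply, RCLike.inner_apply, Real.ringHom_apply]
  rw [Fintype.sum_prod_type, sum_comm]
  exact sum_congr rfl fun i _ => sum_congr rfl fun k _ => mul_comm _ _

theorem abs_multilinearExtensionPartial_sub_le {f : Finset ι → ℝ} {a b : ι → ℝ}
    (ha : ∀ j, a j ∈ Set.Icc (0 : ℝ) 1) (hb : ∀ j, b j ∈ Set.Icc (0 : ℝ) 1) {i : ι} {M : ℝ}
    (hf : ∀ T ⊆ univ.erase i, |f (insert i T) - f T| ≤ M) :
    |multilinearExtensionPartial f a i - multilinearExtensionPartial f b i|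
      ≤ 2 * M * ∑ j, |a j - b j| := by
  have hM : 0 ≤ M := (abs_nonneg _).trans (hf ∅ (empty_subset _))
  rw [multilinearExtensionPartial, multilinearExtensionPartial, ← sum_sub_distrib]
  simp only [← sub_mul]
  refine (abs_sum_bernoulliWeight_sub_mul_le _ ha hb hf).trans ?_
  gcongr
  exact erase_subset i univ

end MultilinearExtension

theorem norm_le_of_abs_apply_le_mul_sum_abs {ι κ : Type*} [Fintype ι] [Fintype κ]
    {u d : EuclideanSpace ℝ (ι × κ)} {K : ℝ} (hK : 0 ≤ K)
    (h : ∀ i k, |u (i, k)| ≤ K * ∑ j, |d (j, k)|) :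
    ‖u‖ ≤ K * Fintype.card ι * ‖d‖ := by
  refine le_of_pow_le_pow_left₀ two_ne_zero (by positivity) ?_
  have hcol : ∀ i k, u (i, k) ^ 2 ≤ K ^ 2 * (Fintype.card ι * ∑ j, d (j, k) ^ 2) := fun i k =>
    calc u (i, k) ^ 2 ≤ (K * ∑ j, |d (j, k)|) ^ 2 := by
          rw [← sq_abs]; exact pow_le_pow_left₀ (abs_nonneg _) (h i k) 2
      _ = K ^ 2 * (∑ j, |d (j, k)|) ^ 2 := by ring
      _ ≤ K ^ 2 * (Fintype.card ι * ∑ j, d (j, k) ^ 2) := by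
          gcongr
          simpa only [sq_abs, card_univ] using
            sq_sum_le_card_mul_sum_sq (s := univ) (f := fun j => |d (j, k)|)
  have hsq (w : EuclideanSpace ℝ (ι × κ)) : ‖w‖ ^ 2 = ∑ k, ∑ i, w (i, k) ^ 2 := by
    rw [EuclideanSpace.real_norm_sq_eq, Fintype.sum_prod_type, sum_comm]
  calc ‖u‖ ^ 2 = ∑ k, ∑ i, u (i, k) ^ 2 := hsq u
    _ ≤ ∑ k, ∑ _i : ι, K ^ 2 * (Fintype.card ι * ∑ j, d (j, k) ^ 2) :=
        sum_le_sum fun k _ => sum_le_sum fun i _ => hcol i k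
    _ = (K * Fintype.card ι * ‖d‖) ^ 2 := by
        rw [mul_pow, hsq d, mul_sum]
        simp only [sum_const, card_univ, nsmul_eq_mul]
        exact sum_congr rfl fun k _ => by ring

theorem abs_sum_range_card_insert_sub_le {n : ℕ} {c : ℕ → ℝ} {cmax : ℝ}
    (hc : ∀ ℓ ≤ n, 0 ≤ c ℓ ∧ c ℓ ≤ cmax) (i : Fin n) (T : Finset (Fin n))
    (hT : T ⊆ univ.erase i) :
    |∑ ℓ ∈ range ((insert i T).card + 1), c ℓ - ∑ ℓ ∈ range (T.card + 1), c ℓ| ≤ cmax := by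
  have hiT : i ∉ T := fun h => notMem_erase i univ (hT h)
  have hcard : T.card + 1 ≤ n := by simpa using card_lt_univ_of_notMem hiT
  rw [card_insert_of_notMem hiT, sum_range_succ _ (T.card + 1), add_sub_cancel_left,
    abs_of_nonneg (hc _ hcard).1]
  exact (hc _ hcard).2

/-- **Smoothness of the fractional potential.**
The fractional potential on `ℝ^{n·m}` (with `m = |E|`) is
`Φ(x) = ∑_e ∑_{S ⊆ [n]} (∏_{j∈S} x_{j,e}) (∏_{j∉S} (1-x_{j,e})) ∑_{ℓ=0}^{|S|} c_e(ℓ)`.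
If `0 ≤ c_e(ℓ) ≤ cmax` for all `ℓ ≤ n`, then its Euclidean gradient is
`2 n² cmax √m`-Lipschitz on the box `[0,1]^{n·m}`. -/
theorem fractional_potential_gradient_lipschitz
    {E : Type*} [Fintype E] (n : ℕ)
    (c : E → ℕ → ℝ) (cmax : ℝ)
    (hc : ∀ e : E, ∀ ℓ ≤ n, 0 ≤ c e ℓ ∧ c e ℓ ≤ cmax)
    (Φ : EuclideanSpace ℝ (Fin n × E) → ℝ)
    (hΦ : ∀ x, Φ x = ∑ e : E, ∑ S ∈ (univ : Finset (Fin n)).powerset,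
        (∏ j ∈ S, x (j, e)) * (∏ j ∈ univ \ S, (1 - x (j, e))) *
          ∑ ℓ ∈ Finset.range (S.card + 1), c e ℓ)
    (x x' : EuclideanSpace ℝ (Fin n × E))
    (hx : ∀ j e, x (j, e) ∈ Set.Icc (0:ℝ) 1)
    (hx' : ∀ j e, x' (j, e) ∈ Set.Icc (0:ℝ) 1) :
    ‖gradient Φ x - gradient Φ x'‖ ≤
      2 * (n : ℝ) ^ 2 * cmax * Real.sqrt (Fintype.card E) * ‖x - x'‖ := by
  rcases isEmpty_or_nonempty (Fin n × E) with hempty | ⟨⟨j₀, e₀⟩⟩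
  · have h0 (y : EuclideanSpace ℝ (Fin n × E)) : ‖y‖ = 0 := by
      simp [EuclideanSpace.norm_eq, univ_eq_empty]
    simp [h0]
  let C (e : E) (S : Finset (Fin n)) : ℝ := ∑ ℓ ∈ range (S.card + 1), c e ℓ
  have hΦC : Φ = fun x => ∑ e, multilinearExtension (C e) fun j => x (j, e) := funext fun x => by
    simp only [hΦ, multilinearExtension, bernoulliWeight_eq_prod_mul_prod _ (subset_univ _), C]
  have hC (e : E) (i : Fin n) : ∀ T ⊆ univ.erase i, |C e (insert i T) - C e T| ≤ cmax :=
    abs_sum_range_card_insert_sub_le (hc e) i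
  have hcmax : 0 ≤ cmax := (abs_nonneg _).trans (hC e₀ j₀ ∅ (empty_subset _))
  have hn : (1 : ℝ) ≤ n := by exact_mod_cast j₀.pos
  have hm : 1 ≤ Real.sqrt (Fintype.card E) :=
    Real.one_le_sqrt.2 (by exact_mod_cast Fintype.card_pos_iff.2 ⟨e₀⟩)
  rw [hΦC, (hasGradientAt_sum_multilinearExtension C x).gradient,
    (hasGradientAt_sum_multilinearExtension C x').gradient]
  calc _ ≤ 2 * cmax * Fintype.card (Fin n) * ‖x - x'‖ :=
        norm_le_of_abs_apply_le_mul_sum_abs (mul_nonneg (by norm_num) hcmax) fun i e => by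
          simpa using abs_multilinearExtensionPartial_sub_le (hx · e) (hx' · e) (hC e i)
    _ ≤ 2 * cmax * (n ^ 2 * Real.sqrt (Fintype.card E)) * ‖x - x'‖ := by
        rw [Fintype.card_fin]
        gcongr
        nlinarith
    _ = _ := by ring
end

section
/- (Expected cost difference equals fractional potential difference.) Fix an agent i. Let π_j be a probability distribution on 𝒫_j for each agent j, and let π̄_i be another probability distribution on 𝒫_i. Let x_{j,e} = P_{p_j ∼ π_j}(e ∈ p_j) for every agent j and resource e, and x̄_{i,e} = P_{p_i ∼ π̄_i}(e ∈ p_i). Then, with all agents sampling independently, c_i(π̄_i, π_{-i}) − c_i(π_i, π_{-i}) = Φ(x̄_i, x_{-i}) − Φ(x_i, x_{-i}), where (x̄_i, x_{-i}) is obtained from x by replacing agent i's marginal vector x_i by x̄_i. -/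
open Finset

/-- The fractional potential of a congestion game with `n` agents, resource
set `E` and costs `c`. -/
noncomputable def fracPotential {E : Type*} [Fintype E] (n : ℕ)
    (c : E → ℕ → ℝ) (y : Fin n → E → ℝ) : ℝ :=
  ∑ e : E, ∑ S ∈ (univ : Finset (Fin n)).powerset,
    (∏ j ∈ S, y j e) * (∏ j ∈ univ \ S, (1 - y j e)) *
      ∑ ℓ ∈ Finset.range (S.card + 1), c e ℓ


lemma indicator_prod {E : Type*} [Fintype E] [DecidableEq E] {n : ℕ}
    (p : Fin n → Finset E) (e : E) (S : Finset (Fin n)) :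
    (∏ j : Fin n, if j ∈ S then (if e ∈ p j then (1:ℝ) else 0)
        else (if e ∈ p j then 0 else 1))
      = if S = univ.filter (fun k => e ∈ p k) then 1 else 0 := by
  split_ifs with h
  · subst h
    apply Finset.prod_eq_one
    intro j _
    by_cases hj : e ∈ p j <;> simp [hj]
  · rw [Finset.ext_iff] at h
    push_neg at h
    obtain ⟨a, ha⟩ := h
    apply Finset.prod_eq_zero (Finset.mem_univ a)
    simp only [Finset.mem_filter, Finset.mem_univ, true_and] at ha
    by_cases h1 : a ∈ S <;> by_cases h2 : e ∈ p a <;> simp [h1, h2] at ha ⊢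

lemma EC_formula {E : Type*} [Fintype E] [DecidableEq E] {n : ℕ}
    (Ps : Fin n → Finset (Finset E)) (c : E → ℕ → ℝ)
    (ν : Fin n → Finset E → ℝ) (hν1 : ∀ j, ∑ s ∈ Ps j, ν j s = 1)
    (i : Fin n) (y : Fin n → E → ℝ)
    (hy : ∀ j e, y j e = ∑ s ∈ Ps j, ν j s * (if e ∈ s then 1 else 0)) :
    ∑ p ∈ Fintype.piFinset Ps,
        (∏ j, ν j (p j)) * ∑ e ∈ p i, c e ((univ.filter fun k => e ∈ p k)).card
      = ∑ e : E, ∑ S ∈ (univ : Finset (Fin n)).powerset,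
          (if i ∈ S then 1 else 0) *
            ((∏ j ∈ S, y j e) * (∏ j ∈ univ \ S, (1 - y j e)) * c e S.card) := by
  have step1 : ∀ p : Fin n → Finset E,
      (∏ j, ν j (p j)) * ∑ e ∈ p i, c e ((univ.filter fun k => e ∈ p k)).card
      = ∑ e : E, ∑ S ∈ (univ : Finset (Fin n)).powerset,
          (if i ∈ S then 1 else 0) *
          (∏ j : Fin n, (ν j (p j)) * (if j ∈ S then (if e ∈ p j then (1:ℝ) else 0)
              else (if e ∈ p j then 0 else 1))) * c e S.card := by
    intro p
    have : ∑ e ∈ p i, c e ((univ.filter fun k => e ∈ p k)).card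
        = ∑ e : E, (if e ∈ p i then c e ((univ.filter fun k => e ∈ p k)).card else 0) := by
      rw [Finset.sum_ite_mem, Finset.univ_inter]
    rw [this, Finset.mul_sum]
    apply Finset.sum_congr rfl
    intro e _
    -- pointwise in e
    have key : (if e ∈ p i then c e ((univ.filter fun k => e ∈ p k)).card else 0)
        = ∑ S ∈ (univ : Finset (Fin n)).powerset,
          (if i ∈ S then 1 else 0) *
          (∏ j : Fin n, (if j ∈ S then (if e ∈ p j then (1:ℝ) else 0)
              else (if e ∈ p j then 0 else 1))) * c e S.card := by
      have : ∀ S ∈ (univ : Finset (Fin n)).powerset,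
          (if i ∈ S then (1:ℝ) else 0) *
          (∏ j : Fin n, (if j ∈ S then (if e ∈ p j then (1:ℝ) else 0)
              else (if e ∈ p j then 0 else 1))) * c e S.card
          = if S = univ.filter (fun k => e ∈ p k) then
              ((if i ∈ S then (1:ℝ) else 0) * c e S.card) else 0 := by
        intro S _
        rw [indicator_prod]
        split_ifs <;> ring
      rw [Finset.sum_congr rfl this, Finset.sum_ite_eq' _ (univ.filter (fun k => e ∈ p k))]
      have hmem : (univ.filter (fun k => e ∈ p k)) ∈ (univ : Finset (Fin n)).powerset := by
        simp
      rw [if_pos hmem]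
      by_cases hi : e ∈ p i <;> simp [hi]
    rw [key, Finset.mul_sum]
    apply Finset.sum_congr rfl
    intro S _
    rw [Finset.prod_mul_distrib]
    ring
  rw [Finset.sum_congr rfl (fun p _ => step1 p), Finset.sum_comm]
  apply Finset.sum_congr rfl
  intro e _
  rw [Finset.sum_comm]
  apply Finset.sum_congr rfl
  intro S hS
  rw [← Finset.sum_mul, ← Finset.mul_sum]
  have hps := Finset.prod_univ_sum Ps (fun j s => ν j s *
      (if j ∈ S then (if e ∈ s then (1:ℝ) else 0) else (if e ∈ s then 0 else 1)))
  rw [← hps]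
  have hfac : (∏ j : Fin n, ∑ s ∈ Ps j, ν j s *
      (if j ∈ S then (if e ∈ s then (1:ℝ) else 0) else (if e ∈ s then 0 else 1)))
      = ∏ j : Fin n, (if j ∈ S then y j e else 1 - y j e) := by
    apply Finset.prod_congr rfl
    intro j _
    by_cases hj : j ∈ S
    · simp only [hj, if_true]
      rw [hy]
    · simp only [hj, if_false]
      have hh : ∀ s ∈ Ps j, ν j s * (if e ∈ s then (0:ℝ) else 1)
          = ν j s - ν j s * (if e ∈ s then 1 else 0) := by
        intro s _; by_cases hs : e ∈ s <;> simp [hs]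
      rw [Finset.sum_congr rfl hh, Finset.sum_sub_distrib, hν1, hy]
  rw [hfac, ← Finset.prod_filter_mul_prod_filter_not univ (· ∈ S)]
  have h1 : univ.filter (· ∈ S) = S := by
    ext a; simp
  have h2 : univ.filter (· ∉ S) = univ \ S := by
    ext a; simp
  rw [h1, h2]
  rw [Finset.prod_congr rfl (fun x hx => if_pos hx),
      Finset.prod_congr rfl (fun x hx => if_neg (Finset.mem_sdiff.mp hx).2)]
  ring

/-- **Expected cost difference equals fractional potential difference.**
Agents sample independently, `p_j ∼ π_j`; `x_{j,e}` are the marginals and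
`x̄_{i,e}` the marginals of an alternative distribution `π̄_i` for agent `i`.
Then `c_i(π̄_i, π_{-i}) - c_i(π_i, π_{-i}) = Φ(x̄_i, x_{-i}) - Φ(x_i, x_{-i})`,
where the expected cost is `E[∑_{e ∈ p_i} c_e(ℓ_e(p))]`. -/
theorem expected_cost_diff_eq_potential_diff
    {E : Type*} [Fintype E] [DecidableEq E]
    (n : ℕ)
    (Ps : Fin n → Finset (Finset E)) (hPs : ∀ j, (Ps j).Nonempty)
    (c : E → ℕ → ℝ)
    (π : Fin n → Finset E → ℝ)
    (hπ0 : ∀ j s, 0 ≤ π j s) (hπ1 : ∀ j, ∑ s ∈ Ps j, π j s = 1)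
    (i : Fin n)
    (πbar : Finset E → ℝ)
    (hπbar0 : ∀ s, 0 ≤ πbar s) (hπbar1 : ∑ s ∈ Ps i, πbar s = 1)
    (x : Fin n → E → ℝ)
    (hx : ∀ j e, x j e = ∑ s ∈ Ps j, π j s * (if e ∈ s then 1 else 0))
    (xbar : E → ℝ)
    (hxbar : ∀ e, xbar e = ∑ s ∈ Ps i, πbar s * (if e ∈ s then 1 else 0)) :
    (∑ p ∈ Fintype.piFinset Ps,
        (∏ j, Function.update π i πbar j (p j)) *
          ∑ e ∈ p i, c e ((univ.filter fun k => e ∈ p k)).card)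
      - (∑ p ∈ Fintype.piFinset Ps,
          (∏ j, π j (p j)) *
            ∑ e ∈ p i, c e ((univ.filter fun k => e ∈ p k)).card)
    = fracPotential n c (Function.update x i xbar) - fracPotential n c x := by
  have hν1 : ∀ j, ∑ s ∈ Ps j, Function.update π i πbar j s = 1 := by
    intro j
    rcases eq_or_ne j i with rfl | hj
    · simpa using hπbar1
    · simpa [Function.update_of_ne hj] using hπ1 j
  have hy : ∀ j e, Function.update x i xbar j e
      = ∑ s ∈ Ps j, Function.update π i πbar j s * (if e ∈ s then 1 else 0) := by
    intro j e
    rcases eq_or_ne j i with rfl | hj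
    · simpa using hxbar e
    · simpa [Function.update_of_ne hj] using hx j e
  rw [EC_formula Ps c (Function.update π i πbar) hν1 i (Function.update x i xbar) hy,
      EC_formula Ps c π hπ1 i x hx, fracPotential, fracPotential,
      ← Finset.sum_sub_distrib, ← Finset.sum_sub_distrib]
  apply Finset.sum_congr rfl
  intro e _
  rw [← Finset.sum_sub_distrib, ← Finset.sum_sub_distrib]
  have huniv : (univ : Finset (Fin n)) = insert i (univ.erase i) :=
    (Finset.insert_erase (Finset.mem_univ i)).symm
  rw [huniv, Finset.sum_powerset_insert (Finset.notMem_erase i univ),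
      Finset.sum_powerset_insert (Finset.notMem_erase i univ),
      ← Finset.sum_add_distrib, ← Finset.sum_add_distrib]
  apply Finset.sum_congr rfl
  intro T hT
  rw [← huniv]
  have hiT : i ∉ T := fun h => Finset.notMem_erase i univ (Finset.mem_powerset.mp hT h)
  have himem : i ∈ univ \ T := Finset.mem_sdiff.mpr ⟨Finset.mem_univ i, hiT⟩
  have hE : univ \ insert i T = (univ \ T).erase i := by
    ext a; simp [not_or, and_comm]
  have hyT : ∏ j ∈ T, Function.update x i xbar j e = ∏ j ∈ T, x j e :=
    Finset.prod_congr rfl (fun j hj =>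
      by rw [Function.update_of_ne (ne_of_mem_of_not_mem hj hiT)])
  have hyE : ∏ j ∈ (univ \ T).erase i, (1 - Function.update x i xbar j e)
      = ∏ j ∈ (univ \ T).erase i, (1 - x j e) :=
    Finset.prod_congr rfl (fun j hj =>
      by rw [Function.update_of_ne (Finset.mem_erase.mp hj).1])
  have hins : ∏ j ∈ insert i T, Function.update x i xbar j e
      = xbar e * ∏ j ∈ T, x j e := by
    rw [Finset.prod_insert hiT, Function.update_self, hyT]
  have hinsx : ∏ j ∈ insert i T, x j e = x i e * ∏ j ∈ T, x j e :=
    Finset.prod_insert hiT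
  have hsd : ∏ j ∈ univ \ T, (1 - Function.update x i xbar j e)
      = (1 - xbar e) * ∏ j ∈ (univ \ T).erase i, (1 - x j e) := by
    rw [← Finset.mul_prod_erase (univ \ T) _ himem, Function.update_self, hyE]
  have hsdx : ∏ j ∈ univ \ T, (1 - x j e)
      = (1 - x i e) * ∏ j ∈ (univ \ T).erase i, (1 - x j e) :=
    (Finset.mul_prod_erase (univ \ T) _ himem).symm
  rw [hE, hyT, hyE, hins, hinsx, hsd, hsdx,
      Finset.card_insert_of_notMem hiT,
      if_neg hiT, if_pos (Finset.mem_insert_self i T),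
      Finset.sum_range_succ (c e) (T.card + 1)]
  ring
end

section
/- (Stationary points of the fractional potential are approximate mixed Nash equilibria.) Assume c_max > 0, the c_e are nondecreasing with 0 ≤ c_e(ℓ) ≤ c_max for ℓ ∈ {0,…,n}, and let λ = 1/(2 n² c_max √m). Let π = (π_1,…,π_n) be a mixed strategy profile with marginals x = (x_{i,e}), let μ ∈ (0, 1/m], let ε ≥ 0, and suppose there exists y ∈ X^μ such that ⟨x − λ∇Φ(x) − y, z − y⟩ ≤ 0 for all z ∈ X^μ (i.e., y is the Euclidean projection of x − λ∇Φ(x) onto X^μ), and ‖x − y‖₂ ≤ ε. Then π is a (4 n² m c_max ε + 2 m² n c_max μ)-approximate mixed Nash equilibrium: for every agent i and every probability distribution π'_i on 𝒫_i, c_i(π_i, π_{-i}) ≤ c_i(π'_i, π_{-i}) + 4 n² m c_max ε + 2 m² n c_max μ. -/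
open Finset RealInnerProductSpace

lemma aux_partition {ι : Type*} [DecidableEq ι] (A : Finset ι) (t : ι → ℝ) :
    ∑ S ∈ A.powerset, (∏ j ∈ S, t j) * ∏ j ∈ A \ S, (1 - t j) = 1 := by
  rw [← Finset.prod_add]; simp

lemma aux_select {ι : Type*} [DecidableEq ι] (A : Finset ι) (χ : ι → ℝ)
    (hχ : ∀ j, χ j = 0 ∨ χ j = 1) (f : Finset ι → ℝ) :
    ∑ S ∈ A.powerset, (∏ j ∈ S, χ j) * (∏ j ∈ A \ S, (1 - χ j)) * f S
      = f (A.filter (fun j => χ j = 1)) := by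
  set T := A.filter (fun j => χ j = 1) with hT
  rw [Finset.sum_eq_single T]
  · have h1 : ∏ j ∈ T, χ j = 1 := Finset.prod_eq_one (by
      intro j hj; exact (Finset.mem_filter.mp hj).2)
    have h2 : ∏ j ∈ A \ T, (1 - χ j) = 1 := Finset.prod_eq_one (by
      intro j hj
      rcases Finset.mem_sdiff.mp hj with ⟨hjA, hjT⟩
      rcases hχ j with h | h
      · rw [h]; ring
      · exact absurd (Finset.mem_filter.mpr ⟨hjA, h⟩) hjT)
    rw [h1, h2]; ring
  · intro S hS hST
    by_cases hsub : S ⊆ T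
    · obtain ⟨j, hjT, hjS⟩ := Finset.exists_of_ssubset (hsub.ssubset_of_ne hST)
      have hjA : j ∈ A \ S := Finset.mem_sdiff.mpr ⟨Finset.mem_of_mem_filter j hjT, hjS⟩
      have hz : (1 - χ j) = 0 := by
        have := (Finset.mem_filter.mp hjT).2; rw [this]; ring
      rw [Finset.prod_eq_zero hjA hz]; ring
    · obtain ⟨j, hjS, hjT⟩ := Finset.not_subset.mp hsub
      have hz : χ j = 0 := by
        rcases hχ j with h | h
        · exact h
        · exact absurd (Finset.mem_filter.mpr ⟨(Finset.mem_powerset.mp hS) hjS, h⟩) hjT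
      rw [Finset.prod_eq_zero hjS hz]; ring
  · intro h
    exact absurd (Finset.mem_powerset.mpr (Finset.filter_subset _ _)) h

lemma aux_hull_mem_Icc {E : Type*} [Fintype E] [DecidableEq E] (P : Finset (Finset E))
    (v : E → ℝ)
    (hv : v ∈ convexHull ℝ {w : E → ℝ | ∃ s ∈ P, w = fun e => if e ∈ s then (1:ℝ) else 0}) :
    ∀ e, 0 ≤ v e ∧ v e ≤ 1 := by
  have hsub : convexHull ℝ {w : E → ℝ | ∃ s ∈ P, w = fun e => if e ∈ s then (1:ℝ) else 0}
      ⊆ Set.pi Set.univ (fun _ : E => Set.Icc (0:ℝ) 1) := by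
    apply convexHull_min
    · rintro w ⟨s, _, rfl⟩ e _
      by_cases h : e ∈ s <;> simp [h]
    · exact convex_pi fun i _ => convex_Icc 0 1
  intro e
  exact ⟨(hsub hv e (Set.mem_univ e)).1, (hsub hv e (Set.mem_univ e)).2⟩

lemma aux_cost {E : Type*} [Fintype E] [DecidableEq E] {n : ℕ}
    (Ps : Fin n → Finset (Finset E)) (c : E → ℕ → ℝ)
    (i : Fin n) (W : Fin n → Finset E → ℝ)
    (x : Fin n → E → ℝ)
    (hW1 : ∀ j, j ≠ i → ∀ e : E, ∑ s ∈ Ps j, W j s * (if e ∈ s then (1:ℝ) else 0) = x j e)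
    (hWsum : ∀ j, j ≠ i → ∑ s ∈ Ps j, W j s = 1) :
    ∑ p ∈ Fintype.piFinset Ps,
        (∏ j, W j (p j)) * ∑ e ∈ p i, c e ((univ.filter fun k => e ∈ p k)).card
      = ∑ e : E, (∑ s ∈ Ps i, W i s * (if e ∈ s then (1:ℝ) else 0)) *
          ∑ S ∈ ((univ : Finset (Fin n)).erase i).powerset,
            (∏ j ∈ S, x j e) * (∏ j ∈ ((univ : Finset (Fin n)).erase i) \ S, (1 - x j e)) *
              c e (S.card + 1) := by
  classical
  set A := (univ : Finset (Fin n)).erase i with hA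
  set F : E → Finset (Fin n) → Fin n → Finset E → ℝ := fun e S j s =>
    W j s * (if j = i then (if e ∈ s then (1:ℝ) else 0)
      else if j ∈ S then (if e ∈ s then (1:ℝ) else 0)
      else (1 - if e ∈ s then (1:ℝ) else 0)) with hF
  -- product splitting
  have prodF : ∀ (e : E) (S : Finset (Fin n)), S ∈ A.powerset → ∀ p : Fin n → Finset E,
      ∏ j, F e S j (p j) = (∏ j, W j (p j)) * ((if e ∈ p i then (1:ℝ) else 0) *
        ((∏ j ∈ S, if e ∈ p j then (1:ℝ) else 0) *
          ∏ j ∈ A \ S, (1 - if e ∈ p j then (1:ℝ) else 0))) := by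
    intro e S hS p
    have hSA : S ⊆ A := Finset.mem_powerset.mp hS
    rw [hF]
    simp only []
    rw [Finset.prod_mul_distrib]
    congr 1
    rw [← Finset.mul_prod_erase univ _ (Finset.mem_univ i), if_pos rfl]
    congr 1
    rw [← Finset.prod_sdiff hSA, mul_comm]
    congr 1
    · apply Finset.prod_congr rfl
      intro j hj
      have hji : j ≠ i := Finset.ne_of_mem_erase (hSA hj)
      rw [if_neg hji, if_pos hj]
    · apply Finset.prod_congr rfl
      intro j hj
      rcases Finset.mem_sdiff.mp hj with ⟨hjA, hjS⟩
      rw [if_neg (Finset.ne_of_mem_erase hjA), if_neg hjS]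
  -- step 1 : rewrite inner sums
  have step1 : ∀ p : Fin n → Finset E,
      (∏ j, W j (p j)) * ∑ e ∈ p i, c e ((univ.filter fun k => e ∈ p k)).card
        = ∑ e : E, ∑ S ∈ A.powerset, c e (S.card + 1) * ∏ j, F e S j (p j) := by
    intro p
    have ha : ∑ e ∈ p i, c e ((univ.filter fun k => e ∈ p k)).card
        = ∑ e : E, if e ∈ p i then c e ((univ.filter fun k => e ∈ p k)).card else 0 := by
      rw [Finset.sum_ite_mem, Finset.univ_inter]
    rw [ha, Finset.mul_sum]
    apply Finset.sum_congr rfl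
    intro e _
    by_cases he : e ∈ p i
    · rw [if_pos he]
      -- card identity
      have hcard : (univ.filter fun k => e ∈ p k).card
          = ((A.filter fun k => e ∈ p k)).card + 1 := by
        have hu : (univ : Finset (Fin n)) = insert i A :=
          (Finset.insert_erase (Finset.mem_univ i)).symm
        rw [hu, Finset.filter_insert, if_pos he, Finset.card_insert_of_notMem (by simp [hA])]
      have hsel := aux_select A (fun j => if e ∈ p j then (1:ℝ) else 0)
        (by intro j; by_cases h : e ∈ p j <;> simp [h]) (fun S => c e (S.card + 1))
      have hfilt : (A.filter fun j => (if e ∈ p j then (1:ℝ) else 0) = 1)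
          = A.filter fun k => e ∈ p k := by
        apply Finset.filter_congr
        intro j _
        by_cases h : e ∈ p j <;> simp [h]
      rw [hfilt] at hsel
      rw [hcard, ← hsel, Finset.mul_sum]
      apply Finset.sum_congr rfl
      intro S hS
      rw [prodF e S hS p, if_pos he]
      ring
    · rw [if_neg he, mul_zero]
      symm
      apply Finset.sum_eq_zero
      intro S hS
      rw [prodF e S hS p, if_neg he]
      ring
  rw [Finset.sum_congr rfl (fun p _ => step1 p)]
  rw [Finset.sum_comm]
  apply Finset.sum_congr rfl
  intro e _
  rw [Finset.sum_comm, Finset.mul_sum]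
  apply Finset.sum_congr rfl
  intro S hS
  have hSA : S ⊆ A := Finset.mem_powerset.mp hS
  rw [← Finset.mul_sum, ← Finset.prod_univ_sum]
  -- evaluate the product of sums
  have : ∏ j, ∑ s ∈ Ps j, F e S j s
      = (∑ s ∈ Ps i, W i s * (if e ∈ s then (1:ℝ) else 0)) *
        ((∏ j ∈ S, x j e) * ∏ j ∈ A \ S, (1 - x j e)) := by
    rw [← Finset.mul_prod_erase univ _ (Finset.mem_univ i)]
    congr 1
    · apply Finset.sum_congr rfl
      intro s _
      simp [hF]
    · rw [← hA, ← Finset.prod_sdiff hSA, mul_comm]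
      congr 1
      · apply Finset.prod_congr rfl
        intro j hj
        have hji : j ≠ i := Finset.ne_of_mem_erase (hSA hj)
        rw [← hW1 j hji e]
        apply Finset.sum_congr rfl
        intro s _
        rw [hF]; simp only [if_neg hji, if_pos hj]
      · apply Finset.prod_congr rfl
        intro j hj
        rcases Finset.mem_sdiff.mp hj with ⟨hjA, hjS⟩
        have hji : j ≠ i := Finset.ne_of_mem_erase hjA
        have : ∑ s ∈ Ps j, F e S j s
            = ∑ s ∈ Ps j, (W j s - W j s * (if e ∈ s then (1:ℝ) else 0)) := by
          apply Finset.sum_congr rfl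
          intro s _
          rw [hF]; simp only [if_neg hji, if_neg hjS]; ring
        rw [this, Finset.sum_sub_distrib, hWsum j hji, hW1 j hji e]
  rw [this]
  ring

lemma aux_diff_prod {F : Type*} [NormedAddCommGroup F] [NormedSpace ℝ F] {ι : Type*}
    (u : Finset ι) (f : ι → F → ℝ) (x : F) (h : ∀ j ∈ u, DifferentiableAt ℝ (f j) x) :
    DifferentiableAt ℝ (fun z => ∏ j ∈ u, f j z) x := by
  induction u using Finset.cons_induction with
  | empty => simp
  | cons a s ha ih =>
    simp only [Finset.prod_cons]
    exact (h a (Finset.mem_cons_self _ _)).mul (ih fun j hj => h j (Finset.mem_cons_of_mem hj))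

lemma aux_grad {E : Type*} [Fintype E] [DecidableEq E] {n : ℕ}
    (c : E → ℕ → ℝ)
    (Φ : EuclideanSpace ℝ (Fin n × E) → ℝ)
    (hΦ : ∀ z, Φ z = ∑ e : E, ∑ S ∈ (univ : Finset (Fin n)).powerset,
        (∏ j ∈ S, z (j, e)) * (∏ j ∈ univ \ S, (1 - z (j, e))) *
          ∑ ℓ ∈ Finset.range (S.card + 1), c e ℓ)
    (x : EuclideanSpace ℝ (Fin n × E)) (i : Fin n) (e : E) :
    (gradient Φ x) (i, e) = ∑ S ∈ ((univ : Finset (Fin n)).erase i).powerset,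
      (∏ j ∈ S, x (j, e)) * (∏ j ∈ ((univ : Finset (Fin n)).erase i) \ S, (1 - x (j, e))) *
        c e (S.card + 1) := by
  classical
  set A := (univ : Finset (Fin n)).erase i with hA
  set G : ℝ := ∑ S ∈ A.powerset,
      (∏ j ∈ S, x (j, e)) * (∏ j ∈ A \ S, (1 - x (j, e))) * c e (S.card + 1) with hG
  set v : EuclideanSpace ℝ (Fin n × E) := EuclideanSpace.single (i, e) (1:ℝ) with hv
  have hcoord : ∀ (q : Fin n × E) (z : EuclideanSpace ℝ (Fin n × E)),
      DifferentiableAt ℝ (fun w : EuclideanSpace ℝ (Fin n × E) => w q) z :=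
    fun q z => (EuclideanSpace.proj (𝕜 := ℝ) q).differentiableAt
  -- differentiability of Φ
  have hdiff : DifferentiableAt ℝ Φ x := by
    have : Φ = fun z : EuclideanSpace ℝ (Fin n × E) =>
        ∑ e : E, ∑ S ∈ (univ : Finset (Fin n)).powerset,
          (∏ j ∈ S, z (j, e)) * (∏ j ∈ univ \ S, (1 - z (j, e))) *
            ∑ ℓ ∈ Finset.range (S.card + 1), c e ℓ := funext hΦ
    rw [this]
    apply DifferentiableAt.fun_sum; intro e' _
    apply DifferentiableAt.fun_sum; intro S _
    apply DifferentiableAt.mul_const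
    have h1 := aux_diff_prod S (fun j (z : EuclideanSpace ℝ (Fin n × E)) => z (j, e')) x
      (fun j _ => hcoord (j, e') x)
    have h2 := aux_diff_prod (univ \ S) (fun j (z : EuclideanSpace ℝ (Fin n × E)) => 1 - z (j, e')) x
      (fun j _ => (differentiableAt_const (1:ℝ)).sub (hcoord (j, e') x))
    exact h1.mul h2
  -- line identity
  have hco : ∀ (t : ℝ) (j : Fin n) (e' : E),
      (x + t • v) (j, e') = x (j, e') + (if j = i ∧ e' = e then t else 0) := by
    intro t j e'
    rw [hv]
    simp only [PiLp.add_apply, PiLp.smul_apply, EuclideanSpace.single_apply, smul_eq_mul,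
      Prod.mk.injEq]
    by_cases h1 : j = i <;> by_cases h2 : e' = e <;> simp [h1, h2]
  have hline : ∀ t : ℝ, Φ (x + t • v) = Φ x + t * G := by
    intro t
    rw [hΦ, hΦ]
    have hper : ∀ e' : E,
        (∑ S ∈ (univ : Finset (Fin n)).powerset,
          (∏ j ∈ S, (x + t • v) (j, e')) * (∏ j ∈ univ \ S, (1 - (x + t • v) (j, e'))) *
            ∑ ℓ ∈ Finset.range (S.card + 1), c e' ℓ)
        = (∑ S ∈ (univ : Finset (Fin n)).powerset,
            (∏ j ∈ S, x (j, e')) * (∏ j ∈ univ \ S, (1 - x (j, e'))) *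
              ∑ ℓ ∈ Finset.range (S.card + 1), c e' ℓ)
          + (if e' = e then t * G else 0) := by
      intro e'
      by_cases he' : e' = e
      · subst he'
        rw [if_pos rfl, hG]
        have huniv : (univ : Finset (Fin n)) = insert i A :=
          (Finset.insert_erase (Finset.mem_univ i)).symm
        have hiA : i ∉ A := by simp [hA]
        rw [huniv, Finset.sum_powerset_insert hiA, Finset.sum_powerset_insert hiA,
          Finset.mul_sum, ← Finset.sum_add_distrib, ← Finset.sum_add_distrib,
          ← Finset.sum_add_distrib]
        apply Finset.sum_congr rfl
        intro S hS
        have hSA : S ⊆ A := Finset.mem_powerset.mp hS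
        have hiS : i ∉ S := fun h => hiA (hSA h)
        have hins : insert i A \ S = insert i (A \ S) := Finset.insert_sdiff_of_notMem _ hiS
        have hiAS : i ∉ A \ S := fun h => hiA (Finset.mem_sdiff.mp h).1
        have hins2 : insert i A \ insert i S = A \ S := by
          ext j
          by_cases hj : j = i <;> simp [hj, hiA, hiS]
        have hxS : ∀ j ∈ S, (x + t • v) (j, e') = x (j, e') := by
          intro j hj
          rw [hco, if_neg (by rintro ⟨hh1, -⟩; exact hiS (hh1 ▸ hj)), add_zero]
        have hxAS : ∀ j ∈ A \ S, (x + t • v) (j, e') = x (j, e') := by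
          intro j hj
          rw [hco, if_neg (by rintro ⟨hh1, -⟩; exact hiAS (hh1 ▸ hj)), add_zero]
        have hxi : (x + t • v) (i, e') = x (i, e') + t := by
          rw [hco, if_pos ⟨rfl, rfl⟩]
        have e1 : ∏ j ∈ S, (x + t • v) (j, e') = ∏ j ∈ S, x (j, e') :=
          Finset.prod_congr rfl hxS
        have e2 : ∏ j ∈ insert i A \ S, (1 - (x + t • v) (j, e'))
            = (1 - (x (i, e') + t)) * ∏ j ∈ A \ S, (1 - x (j, e')) := by
          rw [hins, Finset.prod_insert hiAS, hxi]
          congr 1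
          exact Finset.prod_congr rfl fun j hj => by rw [hxAS j hj]
        have e3 : ∏ j ∈ insert i S, (x + t • v) (j, e')
            = (x (i, e') + t) * ∏ j ∈ S, x (j, e') := by
          rw [Finset.prod_insert hiS, hxi]
          congr 1
        have e4 : ∏ j ∈ insert i A \ insert i S, (1 - (x + t • v) (j, e'))
            = ∏ j ∈ A \ S, (1 - x (j, e')) := by
          rw [hins2]
          exact Finset.prod_congr rfl fun j hj => by rw [hxAS j hj]
        have e5 : ∏ j ∈ insert i A \ S, (1 - x (j, e'))
            = (1 - x (i, e')) * ∏ j ∈ A \ S, (1 - x (j, e')) := by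
          rw [hins, Finset.prod_insert hiAS]
        have e6 : ∏ j ∈ insert i A \ insert i S, (1 - x (j, e'))
            = ∏ j ∈ A \ S, (1 - x (j, e')) := by rw [hins2]
        have e3' : ∏ j ∈ insert i S, x (j, e') = x (i, e') * ∏ j ∈ S, x (j, e') :=
          Finset.prod_insert hiS
        have e7 : (insert i S).card = S.card + 1 := Finset.card_insert_of_notMem hiS
        have e8 : ∑ ℓ ∈ Finset.range (S.card + 1 + 1), c e' ℓ
            = (∑ ℓ ∈ Finset.range (S.card + 1), c e' ℓ) + c e' (S.card + 1) :=
          Finset.sum_range_succ _ _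
        rw [e1, e2, e3, e4, e3', e5, e6, e7, e8]
        ring
      · rw [if_neg he', add_zero]
        apply Finset.sum_congr rfl
        intro S _
        have hx' : ∀ j : Fin n, (x + t • v) (j, e') = x (j, e') := by
          intro j
          rw [hco, if_neg (by rintro ⟨-, hh2⟩; exact he' hh2), add_zero]
        have b1 : ∏ j ∈ S, (x + t • v) (j, e') = ∏ j ∈ S, x (j, e') :=
          Finset.prod_congr rfl fun j _ => hx' j
        have b2 : ∏ j ∈ univ \ S, (1 - (x + t • v) (j, e'))
            = ∏ j ∈ univ \ S, (1 - x (j, e')) :=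
          Finset.prod_congr rfl fun j _ => by rw [hx' j]
        rw [b1, b2]
    rw [Finset.sum_congr rfl fun e' _ => hper e', Finset.sum_add_distrib,
      Finset.sum_ite_eq' univ e fun _ => t * G, if_pos (Finset.mem_univ e)]
  -- derivative along the line, two ways
  have hd1 : HasDerivAt (fun t : ℝ => Φ (x + t • v)) (fderiv ℝ Φ x v) 0 := by
    have hl : HasDerivAt (fun t : ℝ => x + t • v) v 0 := by
      simpa using ((hasDerivAt_id (0:ℝ)).smul_const v).const_add x
    have hx0 : HasFDerivAt Φ (fderiv ℝ Φ x) (x + (0:ℝ) • v) := by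
      simpa using hdiff.hasFDerivAt
    have := hx0.comp_hasDerivAt 0 hl
    exact this
  have hd2 : HasDerivAt (fun t : ℝ => Φ (x + t • v)) G 0 := by
    have : (fun t : ℝ => Φ (x + t • v)) = fun t => Φ x + t * G := funext hline
    rw [this]
    simpa using ((hasDerivAt_id (0:ℝ)).mul_const G).const_add (Φ x)
  have hfd : fderiv ℝ Φ x v = G := hd1.unique hd2
  -- gradient coordinate
  have h1 : ⟪gradient Φ x, v⟫ = fderiv ℝ Φ x v := by
    rw [gradient]
    exact InnerProductSpace.toDual_symm_apply
  have h2 : ⟪gradient Φ x, v⟫ = (gradient Φ x) (i, e) := by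
    rw [hv, EuclideanSpace.inner_single_right]
    simp
  rw [← h2.symm.trans (h1.trans hfd)]


set_option maxHeartbeats 2000000 in
/-- **Approximate stationary points of the fractional potential are approximate
mixed Nash equilibria.**  `Ps i` is agent `i`'s finite strategy set,
`X_i` is the convex hull of the indicator vectors of `Ps i`, and
`X^μ ⊆ ℝ^{n·m}` is the product of the bounded-away polytopes
`X_i^μ = {x ∈ X_i : x_e ≥ μ for every resource active for i}`.
`Φ` is the fractional potential, `λ = 1/(2 n² cmax √m)`, and `π` is a mixed
profile with marginal vector `x`. If the Euclidean projection `y` of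
`x - λ∇Φ(x)` onto `X^μ` satisfies `‖x - y‖ ≤ ε`, then `π` is a
`(4 n² m cmax ε + 2 m² n cmax μ)`-approximate mixed Nash equilibrium. -/
theorem stationary_point_is_approx_nash
    {E : Type*} [Fintype E] [DecidableEq E]
    (n : ℕ)
    (Ps : Fin n → Finset (Finset E)) (hPs : ∀ i, (Ps i).Nonempty)
    (c : E → ℕ → ℝ) (cmax : ℝ) (hcmax : 0 < cmax)
    (hc_mono : ∀ e, Monotone (c e))
    (hc_bdd : ∀ e : E, ∀ ℓ ≤ n, 0 ≤ c e ℓ ∧ c e ℓ ≤ cmax)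
    (Φ : EuclideanSpace ℝ (Fin n × E) → ℝ)
    (hΦ : ∀ z, Φ z = ∑ e : E, ∑ S ∈ (univ : Finset (Fin n)).powerset,
        (∏ j ∈ S, z (j, e)) * (∏ j ∈ univ \ S, (1 - z (j, e))) *
          ∑ ℓ ∈ Finset.range (S.card + 1), c e ℓ)
    (lam : ℝ) (hlam : lam = 1 / (2 * (n : ℝ) ^ 2 * cmax * Real.sqrt (Fintype.card E)))
    (π : Fin n → Finset E → ℝ)
    (hπ0 : ∀ i s, 0 ≤ π i s) (hπ1 : ∀ i, ∑ s ∈ Ps i, π i s = 1)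
    (x : EuclideanSpace ℝ (Fin n × E))
    (hx : ∀ i e, x (i, e) = ∑ s ∈ Ps i, π i s * (if e ∈ s then 1 else 0))
    (μ : ℝ) (hμ0 : 0 < μ) (hμ1 : μ ≤ 1 / (Fintype.card E : ℝ))
    (ε : ℝ) (hε : 0 ≤ ε)
    (y : EuclideanSpace ℝ (Fin n × E))
    (hy : ∀ i : Fin n,
      ((fun e => y (i, e)) ∈ convexHull ℝ
          {v : E → ℝ | ∃ s ∈ Ps i, v = fun e => if e ∈ s then (1:ℝ) else 0}) ∧
      ∀ e : E, (∃ s ∈ Ps i, e ∈ s) → μ ≤ y (i, e))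
    (hproj : ∀ z : EuclideanSpace ℝ (Fin n × E),
      (∀ i : Fin n,
        ((fun e => z (i, e)) ∈ convexHull ℝ
            {v : E → ℝ | ∃ s ∈ Ps i, v = fun e => if e ∈ s then (1:ℝ) else 0}) ∧
        ∀ e : E, (∃ s ∈ Ps i, e ∈ s) → μ ≤ z (i, e)) →
      ⟪(x - lam • gradient Φ x) - y, z - y⟫ ≤ 0)
    (hclose : ‖x - y‖ ≤ ε) :
    ∀ i : Fin n, ∀ π' : Finset E → ℝ,
      (∀ s, 0 ≤ π' s) → (∑ s ∈ Ps i, π' s = 1) →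
      (∑ p ∈ Fintype.piFinset Ps,
          (∏ j, π j (p j)) * ∑ e ∈ p i, c e ((univ.filter fun k => e ∈ p k)).card)
        ≤ (∑ p ∈ Fintype.piFinset Ps,
            (∏ j, Function.update π i π' j (p j)) *
              ∑ e ∈ p i, c e ((univ.filter fun k => e ∈ p k)).card)
          + 4 * (n : ℝ) ^ 2 * (Fintype.card E : ℝ) * cmax * ε
          + 2 * (Fintype.card E : ℝ) ^ 2 * n * cmax * μ := by
  classical
  intro i π' hπ'0 hπ'1
  -- basic size facts
  have hm0 : 0 < Fintype.card E := by
    rcases Nat.eq_zero_or_pos (Fintype.card E) with h | h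
    · rw [h] at hμ1; norm_num at hμ1; linarith
    · exact h
  have hn0 : 0 < n := i.pos
  have hm1 : (1:ℝ) ≤ (Fintype.card E : ℝ) := by exact_mod_cast hm0
  have hn1 : (1:ℝ) ≤ (n : ℝ) := by exact_mod_cast hn0
  set m : ℝ := (Fintype.card E : ℝ) with hmdef
  -- the expected-cost coefficients
  set G : E → ℝ := fun e => ∑ S ∈ ((univ : Finset (Fin n)).erase i).powerset,
      (∏ j ∈ S, x (j, e)) * (∏ j ∈ ((univ : Finset (Fin n)).erase i) \ S, (1 - x (j, e))) *
        c e (S.card + 1) with hGdef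
  have hgrad : ∀ e, (gradient Φ x) (i, e) = G e := fun e => aux_grad c Φ hΦ x i e
  -- marginals lie in [0,1]
  have hx01 : ∀ (j : Fin n) (e : E), 0 ≤ x (j, e) ∧ x (j, e) ≤ 1 := by
    intro j e
    rw [hx]
    constructor
    · apply Finset.sum_nonneg
      intro s _
      exact mul_nonneg (hπ0 j s) (by split <;> norm_num)
    · calc ∑ s ∈ Ps j, π j s * (if e ∈ s then (1:ℝ) else 0) ≤ ∑ s ∈ Ps j, π j s := by
            apply Finset.sum_le_sum
            intro s _
            by_cases h : e ∈ s <;> simp [h, hπ0 j s]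
      _ = 1 := hπ1 j
  -- bounds on G
  have hcard_le : ∀ S ∈ ((univ : Finset (Fin n)).erase i).powerset, S.card + 1 ≤ n := by
    intro S hS
    have h1 := Finset.card_le_card (Finset.mem_powerset.mp hS)
    have h2 : ((univ : Finset (Fin n)).erase i).card = n - 1 := by
      rw [Finset.card_erase_of_mem (Finset.mem_univ i), Finset.card_univ, Fintype.card_fin]
    omega
  have hprod_nn : ∀ (e : E), ∀ S ∈ ((univ : Finset (Fin n)).erase i).powerset,
      0 ≤ (∏ j ∈ S, x (j, e)) * ∏ j ∈ ((univ : Finset (Fin n)).erase i) \ S, (1 - x (j, e)) := by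
    intro e S _
    apply mul_nonneg
    · exact Finset.prod_nonneg fun j _ => (hx01 j e).1
    · exact Finset.prod_nonneg fun j _ => by linarith [(hx01 j e).2]
  have hG0 : ∀ e, 0 ≤ G e := by
    intro e
    rw [hGdef]
    apply Finset.sum_nonneg
    intro S hS
    exact mul_nonneg (hprod_nn e S hS) (hc_bdd e _ (hcard_le S hS)).1
  have hGle : ∀ e, G e ≤ cmax := by
    intro e
    rw [hGdef]
    calc (∑ S ∈ ((univ : Finset (Fin n)).erase i).powerset,
          (∏ j ∈ S, x (j, e)) * (∏ j ∈ ((univ : Finset (Fin n)).erase i) \ S, (1 - x (j, e))) *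
            c e (S.card + 1))
        ≤ ∑ S ∈ ((univ : Finset (Fin n)).erase i).powerset,
          (∏ j ∈ S, x (j, e)) * (∏ j ∈ ((univ : Finset (Fin n)).erase i) \ S, (1 - x (j, e))) *
            cmax := by
          apply Finset.sum_le_sum
          intro S hS
          exact mul_le_mul_of_nonneg_left (hc_bdd e _ (hcard_le S hS)).2 (hprod_nn e S hS)
      _ = cmax := by
          rw [← Finset.sum_mul, aux_partition ((univ : Finset (Fin n)).erase i) (fun j => x (j, e)),
            one_mul]
  -- rewrite the two expected costs
  have hcost1 : (∑ p ∈ Fintype.piFinset Ps,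
        (∏ j, π j (p j)) * ∑ e ∈ p i, c e ((univ.filter fun k => e ∈ p k)).card)
      = ∑ e : E, x (i, e) * G e := by
    have h := aux_cost Ps c i π (fun j e => x (j, e)) (fun j _ e => (hx j e).symm)
      (fun j _ => hπ1 j)
    rw [h]
    exact Finset.sum_congr rfl fun e _ => by rw [← hx i e]
  set x' : E → ℝ := fun e => ∑ s ∈ Ps i, π' s * (if e ∈ s then (1:ℝ) else 0) with hx'def
  have hcost2 : (∑ p ∈ Fintype.piFinset Ps,
        (∏ j, Function.update π i π' j (p j)) * ∑ e ∈ p i, c e ((univ.filter fun k => e ∈ p k)).card)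
      = ∑ e : E, x' e * G e := by
    have h := aux_cost Ps c i (Function.update π i π') (fun j e => x (j, e))
      (fun j hj e => by rw [Function.update_of_ne hj]; exact (hx j e).symm)
      (fun j hj => by rw [Function.update_of_ne hj]; exact hπ1 j)
    rw [h]
    exact Finset.sum_congr rfl fun e _ => by rw [Function.update_self]
  rw [hcost1, hcost2]
  -- a strictly interior point of the polytope
  have hu : ∃ u : E → ℝ,
      u ∈ convexHull ℝ {v : E → ℝ | ∃ s ∈ Ps i, v = fun e => if e ∈ s then (1:ℝ) else 0} ∧
      (∀ e, 0 ≤ u e ∧ u e ≤ 1) ∧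
      ∀ e : E, (∃ s ∈ Ps i, e ∈ s) → 1 / m ≤ u e := by
    have hchoice : ∀ e : E, ∃ s, s ∈ Ps i ∧ ((∃ s' ∈ Ps i, e ∈ s') → e ∈ s) := by
      intro e
      by_cases h : ∃ s' ∈ Ps i, e ∈ s'
      · obtain ⟨s', hs', hes'⟩ := h
        exact ⟨s', hs', fun _ => hes'⟩
      · obtain ⟨s0, hs0⟩ := hPs i
        exact ⟨s0, hs0, fun hh => absurd hh h⟩
    choose pick hpick1 hpick2 using hchoice
    set act : Finset E := univ.filter (fun e => ∃ s ∈ Ps i, e ∈ s) with hactdef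
    by_cases hact : act.Nonempty
    · have hcard_pos : 0 < (act.card : ℝ) := by exact_mod_cast Finset.card_pos.mpr hact
      have hcard_le : (act.card : ℝ) ≤ m := by
        rw [hmdef]; exact_mod_cast Finset.card_le_univ act
      have happ : ∀ e : E,
          ((act.card : ℝ)⁻¹ • ∑ e' ∈ act, (fun e'' => if e'' ∈ pick e' then (1:ℝ) else 0)) e
            = (act.card : ℝ)⁻¹ * ∑ e' ∈ act, (if e ∈ pick e' then (1:ℝ) else 0) := by
        intro e
        simp [Finset.sum_apply]
      refine ⟨(act.card : ℝ)⁻¹ • ∑ e ∈ act, (fun e' => if e' ∈ pick e then (1:ℝ) else 0),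
        ?_, ?_, ?_⟩
      · have hcm : ((act.card : ℝ)⁻¹ • ∑ e ∈ act, (fun e' => if e' ∈ pick e then (1:ℝ) else 0))
            = act.centerMass (fun _ => (1:ℝ)) (fun e => fun e' => if e' ∈ pick e then (1:ℝ) else 0) := by
          rw [Finset.centerMass]
          simp [Finset.sum_const]
        rw [hcm]
        exact Finset.centerMass_mem_convexHull act (fun _ _ => zero_le_one)
          (by simpa [Finset.sum_const] using hcard_pos)
          (fun e _ => ⟨pick e, hpick1 e, rfl⟩)
      · intro e
        rw [happ e]
        constructor
        · exact mul_nonneg (by positivity)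
            (Finset.sum_nonneg fun e' _ => by split <;> norm_num)
        · have hsum_le : (∑ e' ∈ act, (if e ∈ pick e' then (1:ℝ) else 0)) ≤ act.card := by
            calc (∑ e' ∈ act, (if e ∈ pick e' then (1:ℝ) else 0))
                ≤ ∑ e' ∈ act, (1:ℝ) := Finset.sum_le_sum fun e' _ => by split <;> norm_num
              _ = act.card := by simp
          calc (act.card : ℝ)⁻¹ * ∑ e' ∈ act, (if e ∈ pick e' then (1:ℝ) else 0)
              ≤ (act.card : ℝ)⁻¹ * act.card :=
                mul_le_mul_of_nonneg_left hsum_le (by positivity)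
            _ = 1 := by field_simp
      · intro e he
        rw [happ e]
        have heact : e ∈ act := Finset.mem_filter.mpr ⟨Finset.mem_univ e, he⟩
        have hsingle : (1:ℝ) ≤ ∑ e' ∈ act, (if e ∈ pick e' then (1:ℝ) else 0) := by
          have := Finset.single_le_sum (f := fun e' => if e ∈ pick e' then (1:ℝ) else 0)
            (fun e' _ => by split <;> norm_num) heact
          simpa [hpick2 e he] using this
        calc 1 / m ≤ (act.card : ℝ)⁻¹ := by
              rw [one_div]
              exact inv_anti₀ hcard_pos hcard_le
          _ = (act.card : ℝ)⁻¹ * 1 := by ring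
          _ ≤ (act.card : ℝ)⁻¹ * ∑ e' ∈ act, (if e ∈ pick e' then (1:ℝ) else 0) :=
              mul_le_mul_of_nonneg_left hsingle (by positivity)
    · obtain ⟨s0, hs0⟩ := hPs i
      refine ⟨fun e => if e ∈ s0 then (1:ℝ) else 0,
        subset_convexHull ℝ _ ⟨s0, hs0, rfl⟩,
        fun e => by dsimp only; by_cases h : e ∈ s0 <;> simp [h], ?_⟩
      intro e he
      exact absurd (Finset.mem_filter.mpr ⟨Finset.mem_univ e, he⟩)
        (fun hmem => hact ⟨e, hmem⟩)
  obtain ⟨u, hu_mem, hu01, hu_lb⟩ := hu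
  -- x' is in the polytope, with coordinates in [0,1]
  have hx'_mem : x' ∈ convexHull ℝ
      {v : E → ℝ | ∃ s ∈ Ps i, v = fun e => if e ∈ s then (1:ℝ) else 0} := by
    have hcm : x' = (Ps i).centerMass π' (fun s => fun e => if e ∈ s then (1:ℝ) else 0) := by
      funext e
      rw [Finset.centerMass, hπ'1, inv_one, one_smul]
      simp [hx'def]
    rw [hcm]
    exact Finset.centerMass_mem_convexHull _ (fun s _ => hπ'0 s) (by rw [hπ'1]; norm_num)
      (fun s hs => ⟨s, hs, rfl⟩)
  have hx'01 : ∀ e, 0 ≤ x' e ∧ x' e ≤ 1 := by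
    intro e
    rw [hx'def]
    constructor
    · exact Finset.sum_nonneg fun s _ => mul_nonneg (hπ'0 s) (by split <;> norm_num)
    · calc ∑ s ∈ Ps i, π' s * (if e ∈ s then (1:ℝ) else 0) ≤ ∑ s ∈ Ps i, π' s := by
            apply Finset.sum_le_sum
            intro s _
            by_cases h : e ∈ s <;> simp [h, hπ'0 s]
      _ = 1 := hπ'1
  -- the shifted point z
  set β : ℝ := m * μ with hβdef
  have hβ0 : 0 ≤ β := by positivity
  have hβ1 : β ≤ 1 := by
    rw [hβdef]
    calc m * μ ≤ m * (1 / m) := mul_le_mul_of_nonneg_left hμ1 (by linarith)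
      _ = 1 := by field_simp
  set zv : E → ℝ := (1 - β) • x' + β • u with hzvdef
  have hzv_apply : ∀ e, zv e = (1 - β) * x' e + β * u e := fun e => rfl
  have hzv_mem : zv ∈ convexHull ℝ
      {v : E → ℝ | ∃ s ∈ Ps i, v = fun e => if e ∈ s then (1:ℝ) else 0} :=
    (convex_convexHull ℝ _) hx'_mem hu_mem (by linarith) hβ0 (by ring)
  have hzv_lb : ∀ e : E, (∃ s ∈ Ps i, e ∈ s) → μ ≤ zv e := by
    intro e he
    have h1 : β * (1 / m) ≤ β * u e := mul_le_mul_of_nonneg_left (hu_lb e he) hβ0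
    have h2 : β * (1 / m) = μ := by rw [hβdef]; field_simp
    have h3 : 0 ≤ (1 - β) * x' e := mul_nonneg (by linarith) (hx'01 e).1
    rw [hzv_apply]
    linarith
  have hzv01 : ∀ e, 0 ≤ zv e ∧ zv e ≤ 1 := by
    intro e
    rw [hzv_apply]
    constructor
    · have := (hx'01 e).1; have := (hu01 e).1
      nlinarith
    · nlinarith [(hx'01 e).2, (hu01 e).2, (hx'01 e).1, (hu01 e).1]
  have hzx' : ∀ e, |zv e - x' e| ≤ β := by
    intro e
    rw [hzv_apply]
    have h1 : (1 - β) * x' e + β * u e - x' e = β * (u e - x' e) := by ring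
    rw [h1, abs_mul, abs_of_nonneg hβ0]
    have : |u e - x' e| ≤ 1 :=
      abs_le.mpr ⟨by linarith [(hu01 e).1, (hx'01 e).2], by linarith [(hu01 e).2, (hx'01 e).1]⟩
    nlinarith
  -- the test point z' in the product polytope
  set z' : EuclideanSpace ℝ (Fin n × E) :=
    (WithLp.equiv 2 ((Fin n × E) → ℝ)).symm (fun q => if q.1 = i then zv q.2 else y q) with hz'def
  have hz'app : ∀ q : Fin n × E, z' q = if q.1 = i then zv q.2 else y q := fun q => rfl
  have hz'cond : ∀ j : Fin n,
      ((fun e => z' (j, e)) ∈ convexHull ℝ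
          {v : E → ℝ | ∃ s ∈ Ps j, v = fun e => if e ∈ s then (1:ℝ) else 0}) ∧
      ∀ e : E, (∃ s ∈ Ps j, e ∈ s) → μ ≤ z' (j, e) := by
    intro j
    by_cases hj : j = i
    · subst hj
      have : (fun e => z' (j, e)) = zv := by
        funext e; rw [hz'app]; simp
      rw [this]
      exact ⟨hzv_mem, fun e he => by rw [hz'app]; simpa using hzv_lb e he⟩
    · have : (fun e => z' (j, e)) = fun e => y (j, e) := by
        funext e; rw [hz'app]; simp [hj]
      rw [this]
      exact ⟨(hy j).1, fun e he => by rw [hz'app]; simpa [hj] using (hy j).2 e he⟩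
  have hkey := hproj z' hz'cond
  -- constants
  set D : ℝ := 2 * (n:ℝ)^2 * cmax * Real.sqrt m with hDdef
  have hsm0 : 0 < Real.sqrt m := Real.sqrt_pos.mpr (by linarith)
  have hsm1 : 1 ≤ Real.sqrt m := by
    rw [show (1:ℝ) = Real.sqrt 1 by simp]
    exact Real.sqrt_le_sqrt hm1
  have hss : Real.sqrt m * Real.sqrt m = m := Real.mul_self_sqrt (by linarith)
  have hD0 : 0 < D := by
    rw [hDdef]
    have hn2 : (0:ℝ) < (n:ℝ)^2 := by nlinarith
    positivity
  have hlamD : lam * D = 1 := by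
    rw [hlam, hDdef]
    field_simp
  have hy01 : ∀ e, 0 ≤ y (i, e) ∧ y (i, e) ≤ 1 :=
    fun e => aux_hull_mem_Icc (Ps i) _ (hy i).1 e
  -- expand the projection inequality
  have hsub : (x - lam • gradient Φ x) - y = (x - y) - lam • gradient Φ x :=
    sub_right_comm x (lam • gradient Φ x) y
  rw [hsub, inner_sub_left, real_inner_smul_left] at hkey
  have hip : ⟪gradient Φ x, z' - y⟫ = ∑ e : E, G e * (zv e - y (i, e)) := by
    rw [PiLp.inner_apply]
    simp only [RCLike.inner_apply, conj_trivial]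
    rw [Fintype.sum_prod_type, Finset.sum_eq_single_of_mem i (Finset.mem_univ i)]
    · apply Finset.sum_congr rfl
      intro e _
      rw [hgrad e, PiLp.sub_apply, hz'app]
      simp [mul_comm]
    · intro j _ hji
      apply Finset.sum_eq_zero
      intro e _
      rw [PiLp.sub_apply, hz'app]
      simp [hji]
  -- norm of z' - y
  have hnz'y : ‖z' - y‖ ≤ Real.sqrt m := by
    rw [EuclideanSpace.norm_eq]
    apply Real.sqrt_le_sqrt
    calc (∑ q : Fin n × E, ‖(z' - y) q‖^2)
        ≤ ∑ q : Fin n × E, (if q.1 = i then (1:ℝ) else 0) := by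
          apply Finset.sum_le_sum
          rintro ⟨j, e⟩ _
          by_cases hj : j = i
          · subst hj
            have hzy : (z' - y) (j, e) = zv e - y (j, e) := by
              rw [PiLp.sub_apply, hz'app]; simp
            rw [hzy, if_pos rfl, Real.norm_eq_abs]
            have h1 : |zv e - y (j, e)| ≤ 1 := abs_le.mpr
              ⟨by linarith [(hzv01 e).1, (hy01 e).2], by linarith [(hzv01 e).2, (hy01 e).1]⟩
            nlinarith [abs_nonneg (zv e - y (j, e))]
          · have hzy : (z' - y) (j, e) = 0 := by
              rw [PiLp.sub_apply, hz'app]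
              simp [hj]
            rw [hzy, if_neg hj]
            simp
      _ = m := by
          rw [Fintype.sum_prod_type]
          have h : ∀ j : Fin n, (∑ _e : E, if j = i then (1:ℝ) else 0)
              = if j = i then m else 0 := by
            intro j; by_cases hj : j = i <;> simp [hj, hmdef]
          rw [Finset.sum_congr rfl fun j _ => h j, Finset.sum_ite_eq' univ i fun _ => m,
            if_pos (Finset.mem_univ i)]
  -- Cauchy–Schwarz
  have hCS1 : -(ε * Real.sqrt m) ≤ ⟪x - y, z' - y⟫ := by
    have h1 := abs_real_inner_le_norm (x - y) (z' - y)
    have h2 : ‖x - y‖ * ‖z' - y‖ ≤ ε * Real.sqrt m :=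
      mul_le_mul hclose hnz'y (norm_nonneg _) hε
    have h3 := neg_abs_le (⟪x - y, z' - y⟫ : ℝ)
    linarith
  have hT : -(ε * Real.sqrt m) ≤ lam * ⟪gradient Φ x, z' - y⟫ := by linarith
  have hT2 : -(ε * Real.sqrt m * D) ≤ ⟪gradient Φ x, z' - y⟫ := by
    have h4 : D * (lam * ⟪gradient Φ x, z' - y⟫) = ⟪gradient Φ x, z' - y⟫ := by
      rw [← mul_assoc, mul_comm D lam, hlamD, one_mul]
    nlinarith [mul_le_mul_of_nonneg_left hT hD0.le]
  -- term 2
  have hterm2 : ∑ e : E, G e * (y (i, e) - zv e) ≤ 2 * (n:ℝ)^2 * m * cmax * ε := by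
    have h5 : (∑ e : E, G e * (y (i, e) - zv e)) + (∑ e : E, G e * (zv e - y (i, e))) = 0 := by
      rw [← Finset.sum_add_distrib]
      exact Finset.sum_eq_zero fun e _ => by ring
    have h6 : ε * Real.sqrt m * D = 2 * (n:ℝ)^2 * m * cmax * ε := by
      rw [hDdef]
      linear_combination (2 * (n:ℝ)^2 * cmax * ε) * hss
    linarith [hT2, hip ▸ hT2]
  -- term 1
  set gv : EuclideanSpace ℝ (Fin n × E) :=
    (WithLp.equiv 2 ((Fin n × E) → ℝ)).symm (fun q => if q.1 = i then G q.2 else 0) with hgvdef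
  have hgvapp : ∀ q : Fin n × E, gv q = if q.1 = i then G q.2 else 0 := fun q => rfl
  have hip2 : ⟪gv, x - y⟫ = ∑ e : E, G e * (x (i, e) - y (i, e)) := by
    rw [PiLp.inner_apply]
    simp only [RCLike.inner_apply, conj_trivial]
    rw [Fintype.sum_prod_type, Finset.sum_eq_single_of_mem i (Finset.mem_univ i)]
    · apply Finset.sum_congr rfl
      intro e _
      rw [PiLp.sub_apply, hgvapp]
      simp [mul_comm]
    · intro j _ hji
      apply Finset.sum_eq_zero
      intro e _
      rw [hgvapp]
      simp [hji]
  have hgvnorm : ‖gv‖ ≤ cmax * Real.sqrt m := by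
    rw [EuclideanSpace.norm_eq]
    have h7 : (∑ q : Fin n × E, ‖gv q‖^2) ≤ m * cmax^2 := by
      calc (∑ q : Fin n × E, ‖gv q‖^2)
          ≤ ∑ q : Fin n × E, (if q.1 = i then cmax^2 else 0) := by
            apply Finset.sum_le_sum
            rintro ⟨j, e⟩ _
            by_cases hj : j = i
            · subst hj
              rw [hgvapp, if_pos rfl, if_pos rfl, Real.norm_eq_abs,
                abs_of_nonneg (hG0 e)]
              nlinarith [hG0 e, hGle e]
            · rw [hgvapp, if_neg hj, if_neg hj]
              simp
        _ = m * cmax^2 := by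
            rw [Fintype.sum_prod_type]
            have h : ∀ j : Fin n, (∑ _e : E, if j = i then cmax^2 else 0)
                = if j = i then m * cmax^2 else 0 := by
              intro j; by_cases hj : j = i <;> simp [hj, hmdef] <;> ring
            rw [Finset.sum_congr rfl fun j _ => h j,
              Finset.sum_ite_eq' univ i fun _ => m * cmax^2, if_pos (Finset.mem_univ i)]
    calc Real.sqrt (∑ q : Fin n × E, ‖gv q‖^2) ≤ Real.sqrt (m * cmax^2) :=
          Real.sqrt_le_sqrt h7
      _ = Real.sqrt m * cmax := by
          rw [Real.sqrt_mul (by linarith : (0:ℝ) ≤ m), Real.sqrt_sq hcmax.le]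
      _ = cmax * Real.sqrt m := mul_comm _ _
  have hterm1 : ∑ e : E, G e * (x (i, e) - y (i, e)) ≤ cmax * Real.sqrt m * ε := by
    rw [← hip2]
    calc ⟪gv, x - y⟫ ≤ ‖gv‖ * ‖x - y‖ := real_inner_le_norm gv (x - y)
      _ ≤ (cmax * Real.sqrt m) * ε :=
          mul_le_mul hgvnorm hclose (norm_nonneg _) (by positivity)
  -- term 3
  have hterm3 : ∑ e : E, G e * (zv e - x' e) ≤ m * (cmax * β) := by
    calc (∑ e : E, G e * (zv e - x' e)) ≤ ∑ _e : E, cmax * β := by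
          apply Finset.sum_le_sum
          intro e _
          calc G e * (zv e - x' e) ≤ G e * |zv e - x' e| :=
                mul_le_mul_of_nonneg_left (le_abs_self _) (hG0 e)
            _ ≤ cmax * β := mul_le_mul (hGle e) (hzx' e) (abs_nonneg _) hcmax.le
      _ = m * (cmax * β) := by
          rw [Finset.sum_const, Finset.card_univ, hmdef, nsmul_eq_mul]
  -- decomposition
  have hdecomp : ∑ e : E, x (i, e) * G e
      = (∑ e : E, G e * (x (i, e) - y (i, e))) + (∑ e : E, G e * (y (i, e) - zv e))
        + (∑ e : E, G e * (zv e - x' e)) + ∑ e : E, x' e * G e := by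
    rw [← Finset.sum_add_distrib, ← Finset.sum_add_distrib, ← Finset.sum_add_distrib]
    exact Finset.sum_congr rfl fun e _ => by ring
  -- final arithmetic
  have hsm_le : Real.sqrt m ≤ m := by nlinarith
  have k1a : cmax * Real.sqrt m * ε ≤ cmax * m * ε := by
    nlinarith [mul_nonneg (mul_nonneg (sub_nonneg.mpr hsm_le) hcmax.le) hε]
  have hn2 : 1 ≤ (n:ℝ)^2 := by nlinarith
  have k1b : cmax * m * ε ≤ 2 * (n:ℝ)^2 * m * cmax * ε := by
    nlinarith [mul_nonneg (mul_nonneg (mul_nonneg (sub_nonneg.mpr hn2)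
      (by linarith : (0:ℝ) ≤ m)) hcmax.le) hε,
      mul_nonneg (mul_nonneg (by linarith : (0:ℝ) ≤ m) hcmax.le) hε]
  have hmm2 : (0:ℝ) ≤ m^2 * cmax * μ := by positivity
  have k2 : m * (cmax * β) ≤ 2 * m^2 * (n:ℝ) * cmax * μ := by
    rw [hβdef]
    nlinarith [mul_nonneg hmm2 (sub_nonneg.mpr hn1), hmm2]
  linarith [hterm1, hterm2, hterm3, hdecomp, k1a, k1b, k2]
end

section
/- (Distance from the description polytope to its bounded-away version.) For each agent i ∈ {1,…,n} let P̂_i ⊆ {0,1}^E be a nonempty finite set of indicator vectors, X_i = convexHull ℝ P̂_i, and let E_i ⊆ E be the set of resources e with v_e = 1 for some v ∈ P̂_i. Let μ ∈ [0, 1/m]. Then for every x = (x_1,…,x_n) ∈ X_1 × ⋯ × X_n there exists x' = (x'_1,…,x'_n) with x'_i ∈ X_i, x'_{i,e} ≥ μ for every i and every e ∈ E_i, and ‖x − x'‖₂ ≤ √(n m³) · μ, where ‖·‖₂ is the Euclidean norm on (ℝ^E)^n ≅ ℝ^{n·m}. -/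
open Finset

/-- **Distance from the description polytope to its bounded-away version.**
For each agent `i`, `Phat i` is a nonempty finite set of `{0,1}`-indicator
vectors in `ℝ^E`, `X_i = convexHull ℝ (Phat i)`, and `E_i` is the set of
active resources of agent `i`. For `0 ≤ μ ≤ 1/m` (with `m = |E|`), every
`x ∈ X_1 × ⋯ × X_n` is within Euclidean distance `√(n m³)·μ` of a point
`x'` with `x'_i ∈ X_i` and `x'_{i,e} ≥ μ` for all `i` and all `e ∈ E_i`. -/
theorem dist_to_bounded_away_polytope
    {E : Type*} [Fintype E] [DecidableEq E]
    (n : ℕ)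
    (Phat : Fin n → Finset (E → ℝ))
    (hPhatne : ∀ i, (Phat i).Nonempty)
    (h01 : ∀ i, ∀ v ∈ Phat i, ∀ e, v e = 0 ∨ v e = 1)
    (Ei : Fin n → Set E)
    (hEi : ∀ i e, e ∈ Ei i ↔ ∃ v ∈ Phat i, v e = 1)
    (μ : ℝ) (hμ0 : 0 ≤ μ) (hμ1 : μ ≤ 1 / (Fintype.card E : ℝ))
    (x : Fin n → E → ℝ)
    (hx : ∀ i, x i ∈ convexHull ℝ ((Phat i : Set (E → ℝ)))) :
    ∃ x' : Fin n → E → ℝ,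
      (∀ i, x' i ∈ convexHull ℝ ((Phat i : Set (E → ℝ)))) ∧
      (∀ i, ∀ e ∈ Ei i, μ ≤ x' i e) ∧
      Real.sqrt (∑ i : Fin n, ∑ e : E, (x i e - x' i e) ^ 2) ≤
        Real.sqrt ((n : ℝ) * (Fintype.card E : ℝ) ^ 3) * μ := by
  classical
  set m := Fintype.card E with hm
  have hchoose : ∀ i e, ∃ v, v ∈ Phat i ∧ (e ∈ Ei i → v e = 1) := by
    intro i e
    by_cases h : e ∈ Ei i
    · obtain ⟨v, hv, hve⟩ := (hEi i e).1 h
      exact ⟨v, hv, fun _ => hve⟩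
    · obtain ⟨v, hv⟩ := hPhatne i
      exact ⟨v, hv, fun h' => absurd h' h⟩
  choose w hw1 hw2 using hchoose
  set S : Fin n → Finset E := fun i => Finset.univ.filter (fun e => e ∈ Ei i) with hS
  set x' : Fin n → E → ℝ :=
    fun i => (1 - ((S i).card : ℝ) * μ) • x i + ∑ e ∈ S i, μ • w i e with hx'
  -- basic bounds
  have hcard : ∀ i, ((S i).card : ℝ) ≤ (m : ℝ) := by
    intro i
    exact_mod_cast Finset.card_le_card (Finset.subset_univ (S i))
  have hmμ : (m : ℝ) * μ ≤ 1 := by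
    rcases Nat.eq_zero_or_pos m with h0 | hpos
    · have : μ ≤ 0 := by simpa [h0] using hμ1
      nlinarith
    · have hmpos : (0:ℝ) < m := by exact_mod_cast hpos
      rw [le_div_iff₀ hmpos] at hμ1
      linarith [hμ1]
  have hcμ : ∀ i, ((S i).card : ℝ) * μ ≤ 1 := by
    intro i
    calc ((S i).card : ℝ) * μ ≤ (m : ℝ) * μ := by nlinarith [hcard i]
      _ ≤ 1 := hmμ
  have hw01 : ∀ i e e', 0 ≤ w i e e' ∧ w i e e' ≤ 1 := by
    intro i e e'
    rcases h01 i (w i e) (hw1 i e) e' with h | h <;> simp [h]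
  have hxb : ∀ i e, x i e ∈ Set.Icc (0:ℝ) 1 := by
    intro i e
    have hconv : Convex ℝ {f : E → ℝ | f e ∈ Set.Icc (0:ℝ) 1} := by
      intro f hf g hg a b ha hb hab
      obtain ⟨hf0, hf1⟩ := hf
      obtain ⟨hg0, hg1⟩ := hg
      constructor
      · simpa using add_nonneg (mul_nonneg ha hf0) (mul_nonneg hb hg0)
      · simp only [Pi.add_apply, Pi.smul_apply, smul_eq_mul]
        nlinarith
    have hsub : (Phat i : Set (E → ℝ)) ⊆ {f : E → ℝ | f e ∈ Set.Icc (0:ℝ) 1} := by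
      intro v hv
      rcases h01 i v hv e with h | h <;> simp [Set.mem_setOf_eq, h]
    exact convexHull_min hsub hconv (hx i)
  -- membership
  have hx'mem : ∀ i, x' i ∈ convexHull ℝ ((Phat i : Set (E → ℝ))) := by
    intro i
    have hC : Convex ℝ (convexHull ℝ ((Phat i : Set (E → ℝ)))) := convex_convexHull ℝ _
    have hnone : (none : Option E) ∉ (S i).map ⟨some, Option.some_injective E⟩ := by simp
    have hsum : x' i = ∑ o ∈ insert none ((S i).map ⟨some, Option.some_injective E⟩),
        (Option.elim o (1 - ((S i).card : ℝ) * μ) (fun _ => μ)) •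
          (Option.elim o (x i) (w i)) := by
      rw [Finset.sum_insert hnone, Finset.sum_map]
      simp [hx']
    rw [hsum]
    apply hC.sum_mem
    · intro o ho
      rcases o with _ | e
      · simpa using sub_nonneg.2 (hcμ i)
      · simpa using hμ0
    · rw [Finset.sum_insert hnone, Finset.sum_map]
      simp [mul_comm]
    · intro o ho
      rcases o with _ | e
      · exact hx i
      · exact subset_convexHull ℝ _ (hw1 i e)
  -- lower bound
  have hlow : ∀ i, ∀ e ∈ Ei i, μ ≤ x' i e := by
    intro i e he
    have heS : e ∈ S i := by simp [hS, he]
    have h1 : μ • w i e e ≤ ∑ e' ∈ S i, μ • (w i e' e) := by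
      apply Finset.single_le_sum (f := fun e' => μ • (w i e' e)) _ heS
      intro e' _
      exact mul_nonneg hμ0 (hw01 i e' e).1
    have h2 : x' i e = (1 - ((S i).card : ℝ) * μ) * x i e + ∑ e' ∈ S i, μ • (w i e' e) := by
      simp [hx', Finset.sum_apply]
    have h3 : 0 ≤ (1 - ((S i).card : ℝ) * μ) * x i e :=
      mul_nonneg (sub_nonneg.2 (hcμ i)) (hxb i e).1
    have h4 : μ • w i e e = μ := by rw [hw2 i e he]; simp
    rw [h2]
    nlinarith [h1, h3, h4]
  -- coordinate bound
  have key : ∀ i e, (x i e - x' i e) ^ 2 ≤ ((m : ℝ) * μ) ^ 2 := by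
    intro i e
    have hdiff : x i e - x' i e = ∑ e' ∈ S i, μ * (x i e - w i e' e) := by
      simp only [hx', Pi.add_apply, Pi.smul_apply, Finset.sum_apply, smul_eq_mul]
      simp only [mul_sub]
      rw [Finset.sum_sub_distrib, Finset.sum_const, nsmul_eq_mul]
      ring
    have habs : |x i e - x' i e| ≤ ((S i).card : ℝ) * μ := by
      rw [hdiff]
      calc |∑ e' ∈ S i, μ * (x i e - w i e' e)|
          ≤ ∑ e' ∈ S i, |μ * (x i e - w i e' e)| := Finset.abs_sum_le_sum_abs _ _
        _ ≤ ∑ e' ∈ S i, μ := by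
            apply Finset.sum_le_sum
            intro e' _
            rw [abs_mul, abs_of_nonneg hμ0]
            have h1 := hxb i e
            have h2 := hw01 i e' e
            have : |x i e - w i e' e| ≤ 1 := by
              rw [abs_le]; constructor <;> [nlinarith [h1.1, h1.2, h2.1, h2.2]; nlinarith [h1.1, h1.2, h2.1, h2.2]]
            nlinarith [this]
        _ = ((S i).card : ℝ) * μ := by simp [mul_comm]
    have habs2 : |x i e - x' i e| ≤ (m : ℝ) * μ := by
      calc |x i e - x' i e| ≤ ((S i).card : ℝ) * μ := habs
        _ ≤ (m : ℝ) * μ := by nlinarith [hcard i]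
    have := abs_le.1 habs2
    nlinarith [this.1, this.2]
  refine ⟨x', hx'mem, hlow, ?_⟩
  have hsum : (∑ i : Fin n, ∑ e : E, (x i e - x' i e) ^ 2) ≤ (n : ℝ) * (m : ℝ) ^ 3 * μ ^ 2 := by
    calc (∑ i : Fin n, ∑ e : E, (x i e - x' i e) ^ 2)
        ≤ ∑ _i : Fin n, ∑ _e : E, ((m : ℝ) * μ) ^ 2 := by
          apply Finset.sum_le_sum; intro i _
          apply Finset.sum_le_sum; intro e _
          exact key i e
      _ = (n : ℝ) * (m : ℝ) ^ 3 * μ ^ 2 := by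
          simp [Finset.sum_const, Finset.card_univ, hm]
          ring
  calc Real.sqrt (∑ i : Fin n, ∑ e : E, (x i e - x' i e) ^ 2)
      ≤ Real.sqrt ((n : ℝ) * (m : ℝ) ^ 3 * μ ^ 2) := Real.sqrt_le_sqrt hsum
    _ = Real.sqrt ((n : ℝ) * (m : ℝ) ^ 3) * μ := by
        rw [Real.sqrt_mul (by positivity), Real.sqrt_sq hμ0]
end
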